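/- arXiv:math/0111058 — 5 statements merged into one kernel-verified Lean document; each statement's English description precedes it below -/
import Mathlib

section
/- In the monoid L_ω, for all positive integers l ≤ k the following equations hold: δ_k·(δ_l γ_l) = (δ_l γ_l)·δ_k; δ_l·(δ_{k+2} γ_{k+2}) = (δ_k γ_k)·δ_l; (δ_l γ_l)·γ_k = γ_k·(δ_l γ_l); and (δ_{k+2} γ_{k+2})·γ_l = γ_l·(δ_k γ_k). -/
/-- Generators of the monoid `L_ω`: a cup `δ_k` and a cap `γ_k` for every positive integer `k`. -/
inductive LGen : Type
  | cup : ℕ+ → LGen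
  | cap : ℕ+ → LGen

/-- Words in the generators, i.e. elements of the free monoid on the generators. -/
abbrev LWord : Type := FreeMonoid LGen

/-- The word consisting of the single cup generator `δ_k`. -/
def cupW (k : ℕ+) : LWord := FreeMonoid.of (LGen.cup k)

/-- The word consisting of the single cap generator `γ_k`. -/
def capW (k : ℕ+) : LWord := FreeMonoid.of (LGen.cap k)

/-- The defining relations of the monoid `L_ω`. -/
inductive LRel : LWord → LWord → Prop
  | cup {k l : ℕ+} (h : l ≤ k) : LRel (cupW k * cupW l) (cupW l * cupW (k + 2))
  | cap {k l : ℕ+} (h : l ≤ k) : LRel (capW l * capW k) (capW (k + 2) * capW l)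
  | cupcap₁ {k l : ℕ+} (h : l ≤ k) : LRel (cupW l * capW (k + 2)) (capW k * cupW l)
  | cupcap₂ {k l : ℕ+} (h : l ≤ k) : LRel (cupW (k + 2) * capW l) (capW l * cupW k)
  | cupcap₃ (k : ℕ+) : LRel (cupW k * capW (k + 1)) 1
  | cupcap₃' (k : ℕ+) : LRel (cupW (k + 1) * capW k) 1

/-- The smallest monoid congruence containing the defining relations of `L_ω`. -/
def LCon : Con LWord := conGen LRel

/-- The monoid `L_ω`, presented by the cups and caps subject to the relations `LRel`. -/
abbrev Lomega : Type := LCon.Quotient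

/-- The cup `δ_k` as an element of `L_ω`. -/
def dk (k : ℕ+) : Lomega := LCon.mk' (cupW k)

/-- The cap `γ_k` as an element of `L_ω`. -/
def gk (k : ℕ+) : Lomega := LCon.mk' (capW k)

namespace Lomega

lemma mk'_eq_of_lRel {a b : LWord} (h : LRel a b) : LCon.mk' a = LCon.mk' b :=
  (Con.eq _).mpr (ConGen.Rel.of _ _ h)

variable {k l : ℕ+}

lemma dk_mul_dk (h : l ≤ k) : dk k * dk l = dk l * dk (k + 2) := by
  simpa only [dk, map_mul] using mk'_eq_of_lRel (LRel.cup h)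

lemma gk_mul_gk (h : l ≤ k) : gk l * gk k = gk (k + 2) * gk l := by
  simpa only [gk, map_mul] using mk'_eq_of_lRel (LRel.cap h)

lemma dk_mul_gk_add_two (h : l ≤ k) : dk l * gk (k + 2) = gk k * dk l := by
  simpa only [dk, gk, map_mul] using mk'_eq_of_lRel (LRel.cupcap₁ h)

lemma dk_add_two_mul_gk (h : l ≤ k) : dk (k + 2) * gk l = gk l * dk k := by
  simpa only [dk, gk, map_mul] using mk'_eq_of_lRel (LRel.cupcap₂ h)

end Lomega

/-- In `L_ω`, for all positive integers `l ≤ k`: the circle equations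
`δ_k (δ_l γ_l) = (δ_l γ_l) δ_k`, `δ_l (δ_{k+2} γ_{k+2}) = (δ_k γ_k) δ_l`,
`(δ_l γ_l) γ_k = γ_k (δ_l γ_l)` and `(δ_{k+2} γ_{k+2}) γ_l = γ_l (δ_k γ_k)`. -/
theorem Lomega.circle_equations (k l : ℕ+) (h : l ≤ k) :
    dk k * (dk l * gk l) = (dk l * gk l) * dk k ∧
    dk l * (dk (k + 2) * gk (k + 2)) = (dk k * gk k) * dk l ∧
    (dk l * gk l) * gk k = gk k * (dk l * gk l) ∧
    (dk (k + 2) * gk (k + 2)) * gk l = gk l * (dk k * gk k) := by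
  refine ⟨?_, ?_, ?_, ?_⟩
  · calc dk k * (dk l * gk l)
        _ = dk l * (dk (k + 2) * gk l) := by rw [← mul_assoc, dk_mul_dk h, mul_assoc]
        _ = dk l * gk l * dk k := by rw [dk_add_two_mul_gk h, mul_assoc]
  · calc dk l * (dk (k + 2) * gk (k + 2))
        _ = dk k * (dk l * gk (k + 2)) := by rw [← mul_assoc, ← dk_mul_dk h, mul_assoc]
        _ = dk k * gk k * dk l := by rw [dk_mul_gk_add_two h, mul_assoc]
  · calc dk l * gk l * gk k
        _ = dk l * gk (k + 2) * gk l := by rw [mul_assoc, gk_mul_gk h, mul_assoc]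
        _ = gk k * (dk l * gk l) := by rw [dk_mul_gk_add_two h, mul_assoc]
  · calc dk (k + 2) * gk (k + 2) * gk l
        _ = dk (k + 2) * gk l * gk k := by rw [mul_assoc, ← gk_mul_gk h, mul_assoc]
        _ = gk l * (dk k * gk k) := by rw [dk_add_two_mul_gk h, mul_assoc]
end

section
/- Every element of the monoid K_n is equal to an element in Jones normal form: that is, to c^l · h_{[b_1,a_1]} ⋯ h_{[b_k,a_k]} for some l, k ≥ 0, where a_q ≤ b_q for each q, a_1 < … < a_k, and b_1 < … < b_k (the empty product being 1). -/
/-- Generators of the monoid `K_n`: the diapsides `h_i` for `1 ≤ i ≤ n - 1`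
and the circle `c`. -/
inductive KnGen (n : ℕ) : Type
  | h (i : ℕ) (h1 : 1 ≤ i) (h2 : i < n) : KnGen n
  | c : KnGen n

/-- Words in the generators of `K_n`. -/
abbrev KnWord (n : ℕ) : Type := FreeMonoid (KnGen n)

/-- The word consisting of the single generator `h_i`. -/
def hW (n : ℕ) (i : ℕ) (h1 : 1 ≤ i) (h2 : i < n) : KnWord n := FreeMonoid.of (KnGen.h i h1 h2)

/-- The word consisting of the single generator `c`. -/
def cW (n : ℕ) : KnWord n := FreeMonoid.of KnGen.c

/-- The defining relations of the monoid `K_n`. -/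
inductive KnRel (n : ℕ) : KnWord n → KnWord n → Prop
  | comm (i j : ℕ) (hi1 : 1 ≤ i) (hi2 : i < n) (hj1 : 1 ≤ j) (hj2 : j < n)
      (hij : i + 2 ≤ j ∨ j + 2 ≤ i) :
      KnRel n (hW n i hi1 hi2 * hW n j hj1 hj2) (hW n j hj1 hj2 * hW n i hi1 hi2)
  | braid₁ (i : ℕ) (h1 : 1 ≤ i) (h2 : i + 1 < n) :
      KnRel n (hW n i h1 (by omega) * hW n (i + 1) (by omega) h2 * hW n i h1 (by omega))
        (hW n i h1 (by omega))
  | braid₂ (i : ℕ) (h1 : 1 ≤ i) (h2 : i + 1 < n) :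
      KnRel n
        (hW n (i + 1) (by omega) h2 * hW n i h1 (by omega) * hW n (i + 1) (by omega) h2)
        (hW n (i + 1) (by omega) h2)
  | hc (i : ℕ) (h1 : 1 ≤ i) (h2 : i < n) :
      KnRel n (hW n i h1 h2 * cW n) (cW n * hW n i h1 h2)
  | hh (i : ℕ) (h1 : 1 ≤ i) (h2 : i < n) :
      KnRel n (hW n i h1 h2 * hW n i h1 h2) (cW n * hW n i h1 h2)

/-- The smallest monoid congruence containing the defining relations of `K_n`. -/
def KnCon (n : ℕ) : Con (KnWord n) := conGen (KnRel n)

/-- The monoid `K_n`, presented by the generators `h_1, …, h_{n-1}` and `c` subject to the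
relations `KnRel n`. -/
abbrev Kn (n : ℕ) : Type := (KnCon n).Quotient

/-- The diapsis `h_i` as an element of `K_n`. -/
def hK (n : ℕ) (i : ℕ) (h1 : 1 ≤ i) (h2 : i < n) : Kn n := (KnCon n).mk' (hW n i h1 h2)

/-- The circle `c` as an element of `K_n`. -/
def cK (n : ℕ) : Kn n := (KnCon n).mk' (cW n)

/-- The diapsis `h_i` as an element of `K_n`, as a total function of `i`
(junk value `1` for invalid indices). -/
def hT (n : ℕ) (i : ℕ) : Kn n :=
  if h : 1 ≤ i ∧ i < n then hK n i h.1 h.2 else 1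

/-- The block `h_{[i,j]} = h_i h_{i-1} ⋯ h_{j+1} h_j` of `K_n` (for `1 ≤ j ≤ i ≤ n - 1`). -/
def block (n : ℕ) (i j : ℕ) : Kn n :=
  (((List.range' j (i + 1 - j)).reverse).map (hT n)).prod

/-!
Every element of `K_n` is a product of generators, so it suffices to show that the elements
`c^l · h_{[b₁,a₁]} ⋯ h_{[b_k,a_k]}` in normal form are stable under right multiplication by a
block `h_{[d,c]}`. Comparing it with the last block `h_{[b,a]}`, the relations rewrite
`h_{[b,a]} h_{[d,c]}` as `h_{[b,c]} h_{[d,a+2]}`, `h_{[d-2,a]} h_{[b,c]}`, `c · h_{[b,c]}`,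
`h_{[b,c]}` or `h_{[d,c]} h_{[b,a]}`, and the new blocks are inserted one at a time into the
shorter normal form. The first three rewritings decrease the number of generators; the last two do
not, but they leave a block with top `b` to be appended to a normal form all of whose tops are
`< b`, and such an append only ever needs the first rewriting.
-/

namespace Kn

variable {n : ℕ}

theorem mk'_eq_of_rel {a b : KnWord n} (h : KnRel n a b) : (KnCon n).mk' a = (KnCon n).mk' b :=
  (Con.eq _).2 (ConGen.Rel.of _ _ h)

theorem hT_of_valid {i : ℕ} (h1 : 1 ≤ i) (h2 : i < n) : hT n i = hK n i h1 h2 :=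
  dif_pos ⟨h1, h2⟩

theorem hT_of_not_valid {i : ℕ} (h : ¬(1 ≤ i ∧ i < n)) : hT n i = 1 :=
  dif_neg h

theorem commute_hT_hT {i j : ℕ} (hij : i + 2 ≤ j ∨ j + 2 ≤ i) :
    Commute (hT n i) (hT n j) := by
  by_cases hi : 1 ≤ i ∧ i < n
  · by_cases hj : 1 ≤ j ∧ j < n
    · rw [hT_of_valid hi.1 hi.2, hT_of_valid hj.1 hj.2]
      exact mk'_eq_of_rel (.comm i j hi.1 hi.2 hj.1 hj.2 hij)
    · rw [hT_of_not_valid hj]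
      exact .one_right _
  · rw [hT_of_not_valid hi]
    exact .one_left _

theorem commute_cK_hT (i : ℕ) : Commute (cK n) (hT n i) := by
  by_cases hi : 1 ≤ i ∧ i < n
  · rw [hT_of_valid hi.1 hi.2]
    exact (mk'_eq_of_rel (.hc i hi.1 hi.2)).symm
  · rw [hT_of_not_valid hi]
    exact .one_right _

theorem hT_mul_hT_succ_mul_hT {i : ℕ} (h1 : 1 ≤ i) (h2 : i + 1 < n) :
    hT n i * hT n (i + 1) * hT n i = hT n i := by
  rw [hT_of_valid h1 (by omega), hT_of_valid (by omega) h2]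
  exact mk'_eq_of_rel (.braid₁ i h1 h2)

theorem hT_succ_mul_hT_mul_hT_succ {i : ℕ} (h1 : 1 ≤ i) (h2 : i + 1 < n) :
    hT n (i + 1) * hT n i * hT n (i + 1) = hT n (i + 1) := by
  rw [hT_of_valid h1 (by omega), hT_of_valid (by omega) h2]
  exact mk'_eq_of_rel (.braid₂ i h1 h2)

theorem hT_mul_hT_self {i : ℕ} (h1 : 1 ≤ i) (h2 : i < n) :
    hT n i * hT n i = cK n * hT n i := by
  rw [hT_of_valid h1 h2]
  exact mk'_eq_of_rel (.hh i h1 h2)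

theorem block_of_lt {i j : ℕ} (h : i < j) : block n i j = 1 := by
  simp [block, Nat.sub_eq_zero_of_le (show i + 1 ≤ j by omega)]

theorem block_self (i : ℕ) : block n i i = hT n i := by
  simp [block]

theorem block_mul_block_consecutive {i j k : ℕ} (hjk : j ≤ k + 1) (hki : k ≤ i) :
    block n i (k + 1) * block n k j = block n i j := by
  have h := List.range'_append_1 (s := j) (m := k + 1 - j) (n := i - k)
  rw [show j + (k + 1 - j) = k + 1 by omega, show k + 1 - j + (i - k) = i + 1 - j by omega] at h
  rw [block, block, block, show i + 1 - (k + 1) = i - k by omega, ← List.prod_append,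
    ← List.map_append, ← List.reverse_append, h]

theorem block_succ {i j : ℕ} (h : j ≤ i + 1) :
    block n (i + 1) j = hT n (i + 1) * block n i j := by
  rw [← block_mul_block_consecutive h le_self_add, block_self]

theorem block_eq_mul_hT {i j : ℕ} (h : j ≤ i) :
    block n i j = block n i (j + 1) * hT n j := by
  rw [← block_mul_block_consecutive le_self_add h, block_self]

theorem commute_block {x : Kn n} {i j : ℕ}
    (hx : ∀ k, j ≤ k → k ≤ i → Commute x (hT n k)) : Commute x (block n i j) :=
  Commute.list_prod_right _ _ fun y hy => by
    obtain ⟨k, hk, rfl⟩ := List.mem_map.1 hy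
    rw [List.mem_reverse, List.mem_range'_1] at hk
    exact hx k hk.1 (by omega)

theorem commute_cK_block (i j : ℕ) : Commute (cK n) (block n i j) :=
  commute_block fun k _ _ => commute_cK_hT k

theorem commute_hT_block {k i j : ℕ} (h : k + 2 ≤ j ∨ i + 2 ≤ k) :
    Commute (hT n k) (block n i j) :=
  commute_block fun _ _ _ => commute_hT_hT (by omega)

theorem commute_block_block {a b c d : ℕ} (h : b + 2 ≤ c ∨ d + 2 ≤ a) :
    Commute (block n b a) (block n d c) :=
  commute_block fun _ _ _ => (commute_hT_block (by omega)).symm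

theorem block_mul_block_eq_cK_mul {a b c : ℕ} (hc : 1 ≤ c) (hca : c ≤ a) (hab : a ≤ b)
    (hb : b < n) :
    block n b a * block n a c = cK n * block n b c := by
  obtain ⟨e, rfl⟩ : ∃ e, a = e + 1 := ⟨a - 1, by omega⟩
  have absorb : block n b (e + 1) * hT n (e + 1) = cK n * block n b (e + 1) := by
    rw [block_eq_mul_hT hab, mul_assoc, hT_mul_hT_self (by omega) (by omega), ← mul_assoc,
      ← (commute_cK_block b (e + 2)).eq, mul_assoc]
  rw [block_succ hca, ← mul_assoc, absorb, mul_assoc,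
    block_mul_block_consecutive hca (by omega)]

theorem hT_mul_block {a c d : ℕ} (ha : 1 ≤ a) (hca : c ≤ a) (had : a < d) (hd : d < n) :
    hT n a * block n d c = block n d (a + 2) * block n a c := by
  obtain ⟨e, rfl⟩ : ∃ e, a = e + 1 := ⟨a - 1, by omega⟩
  have hsplit :
      block n d c = block n d (e + 3) * (hT n (e + 2) * (hT n (e + 1) * block n e c)) := by
    rw [← block_succ hca, ← block_succ (by omega), block_mul_block_consecutive (by omega) had]
  have hcomm : Commute (hT n (e + 1)) (block n d (e + 3)) := commute_hT_block (Or.inl le_rfl)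
  calc hT n (e + 1) * block n d c
      = block n d (e + 3) * (hT n (e + 1) * hT n (e + 2) * hT n (e + 1) * block n e c) := by
        rw [hsplit, ← mul_assoc, hcomm.eq]
        simp only [mul_assoc]
    _ = block n d (e + 1 + 2) * block n (e + 1) c := by
        rw [hT_mul_hT_succ_mul_hT ha (by omega), block_succ hca]

theorem block_mul_block_of_le_of_lt {a b c d : ℕ} (ha : 1 ≤ a) (hca : c ≤ a) (hab : a ≤ b)
    (had : a < d) (hd : d < n) :
    block n b a * block n d c = block n b c * block n d (a + 2) := by
  rw [block_eq_mul_hT hab, mul_assoc, hT_mul_block ha hca had hd,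
    (commute_block_block (Or.inr le_rfl)).eq, ← mul_assoc,
    block_mul_block_consecutive (by omega) hab]

theorem block_mul_block_add_two {a b c e : ℕ} (hae : a ≤ e + 1) (hc : c ≤ e + 2)
    (heb : e + 2 ≤ b) (hb : b < n) :
    block n b a * block n (e + 2) c = block n e a * block n b c := by
  have braid : block n b (e + 2) * hT n (e + 1) * hT n (e + 2) = block n b (e + 2) := by
    rw [block_eq_mul_hT heb, mul_assoc, mul_assoc, ← mul_assoc (hT n (e + 2)),
      hT_succ_mul_hT_mul_hT_succ (by omega) (by omega)]
  have hcomm : Commute (block n e a) (hT n (e + 2)) := (commute_hT_block (Or.inr le_rfl)).symm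
  calc block n b a * block n (e + 2) c
      = block n b (e + 2) * hT n (e + 1) * (block n e a * hT n (e + 2)) * block n (e + 1) c := by
        rw [← block_mul_block_consecutive (k := e + 1) (by omega) (by omega), block_succ hae,
          block_succ hc]
        simp only [mul_assoc]
    _ = block n b (e + 2) * block n e a * block n (e + 1) c := by
        rw [hcomm.eq, ← mul_assoc, braid]
    _ = block n e a * block n b c := by
        rw [(commute_block_block (Or.inl le_rfl)).symm.eq, mul_assoc,
          block_mul_block_consecutive hc (by omega)]

/-- `ps` lists the blocks `h_{[b,a]}` of a Jones normal form as pairs `(b, a)`, with all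
indices `< t`. -/
def IsNormalForm (t : ℕ) (ps : List (ℕ × ℕ)) : Prop :=
  (∀ q ∈ ps, 1 ≤ q.2 ∧ q.2 ≤ q.1 ∧ q.1 < t) ∧
    List.Pairwise (· < ·) (ps.map Prod.snd) ∧ List.Pairwise (· < ·) (ps.map Prod.fst)

def blocksProd (n : ℕ) (ps : List (ℕ × ℕ)) : Kn n :=
  (ps.map fun q => block n q.1 q.2).prod

def numGens (ps : List (ℕ × ℕ)) : ℕ :=
  (ps.map fun q => q.1 + 1 - q.2).sum

/-- `x = c^l · h_{[b₁,a₁]} ⋯ h_{[b_k,a_k]}` in normal form with all indices `< t` and at most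
`k` generators `h_i`. -/
def HasNormalForm (n k t : ℕ) (x : Kn n) : Prop :=
  ∃ (l : ℕ) (ps : List (ℕ × ℕ)),
    IsNormalForm t ps ∧ numGens ps ≤ k ∧ x = cK n ^ l * blocksProd n ps

theorem isNormalForm_nil (t : ℕ) : IsNormalForm t [] := by
  simp [IsNormalForm]

theorem IsNormalForm.mono {t t' : ℕ} {ps : List (ℕ × ℕ)} (h : IsNormalForm t ps)
    (ht : t ≤ t') : IsNormalForm t' ps :=
  ⟨fun q hq => have := h.1 q hq; ⟨this.1, this.2.1, by omega⟩, h.2⟩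

theorem isNormalForm_append_singleton {t a b : ℕ} {ps : List (ℕ × ℕ)} :
    IsNormalForm t (ps ++ [(b, a)]) ↔
      IsNormalForm b ps ∧ (∀ q ∈ ps, q.2 < a) ∧ 1 ≤ a ∧ a ≤ b ∧ b < t := by
  simp only [IsNormalForm, List.map_append, List.pairwise_append, List.mem_append,
    List.mem_singleton, List.map_cons, List.map_nil, List.pairwise_singleton, List.forall_mem_map]
  constructor
  · rintro ⟨hq, ⟨hsnd, -, hlast_snd⟩, ⟨hfst, -, hlast_fst⟩⟩
    have hba := hq (b, a) (Or.inr rfl)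
    refine ⟨⟨fun q h => ?_, hsnd, hfst⟩, fun q h => hlast_snd q h a rfl, hba⟩
    exact ⟨(hq q (.inl h)).1, (hq q (.inl h)).2.1, hlast_fst q h b rfl⟩
  · rintro ⟨⟨hq, hsnd, hfst⟩, hlt, ha, hab, hbt⟩
    refine ⟨?_, ⟨hsnd, trivial, fun q h _ e => e ▸ hlt q h⟩,
      ⟨hfst, trivial, fun q h _ e => e ▸ (hq q h).2.2⟩⟩
    rintro q (h | rfl)
    · exact ⟨(hq q h).1, (hq q h).2.1, by have := (hq q h).2.2; omega⟩
    · exact ⟨ha, hab, hbt⟩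

theorem blocksProd_append_singleton (ps : List (ℕ × ℕ)) (b a : ℕ) :
    blocksProd n (ps ++ [(b, a)]) = blocksProd n ps * block n b a := by
  simp [blocksProd]

theorem numGens_append_singleton (ps : List (ℕ × ℕ)) (b a : ℕ) :
    numGens (ps ++ [(b, a)]) = numGens ps + (b + 1 - a) := by
  simp [numGens]

theorem commute_cK_blocksProd (ps : List (ℕ × ℕ)) : Commute (cK n) (blocksProd n ps) :=
  Commute.list_prod_right _ _ fun _ hx => by
    obtain ⟨q, -, rfl⟩ := List.mem_map.1 hx
    exact commute_cK_block _ _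

theorem hasNormalForm_blocksProd {t : ℕ} {ps : List (ℕ × ℕ)} (h : IsNormalForm t ps) :
    HasNormalForm n (numGens ps) t (blocksProd n ps) :=
  ⟨0, ps, h, le_rfl, by rw [pow_zero, one_mul]⟩

theorem HasNormalForm.mono {k k' t t' : ℕ} {x : Kn n} (h : HasNormalForm n k t x) (hk : k ≤ k')
    (ht : t ≤ t') : HasNormalForm n k' t' x :=
  let ⟨l, ps, hps, hlen, hx⟩ := h
  ⟨l, ps, hps.mono ht, hlen.trans hk, hx⟩

theorem HasNormalForm.mul_cK {k t : ℕ} {x : Kn n} (h : HasNormalForm n k t x) :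
    HasNormalForm n k t (x * cK n) := by
  obtain ⟨l, ps, hps, hlen, rfl⟩ := h
  refine ⟨l + 1, ps, hps, hlen, ?_⟩
  rw [mul_assoc, ← (commute_cK_blocksProd ps).eq, ← mul_assoc, pow_succ]

theorem HasNormalForm.mul {k k' t t' : ℕ} {x y : Kn n} (hx : HasNormalForm n k t x)
    (hy : ∀ ps, IsNormalForm t ps → numGens ps ≤ k →
      HasNormalForm n k' t' (blocksProd n ps * y)) :
    HasNormalForm n k' t' (x * y) := by
  obtain ⟨l, ps, hps, hlen, rfl⟩ := hx
  obtain ⟨l', ps', hps', hlen', hy⟩ := hy ps hps hlen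
  exact ⟨l + l', ps', hps', hlen', by rw [mul_assoc, hy, ← mul_assoc, pow_add]⟩

theorem hasNormalForm_blocksProd_mul_block_of_bot_lt {R : List (ℕ × ℕ)} {c d t : ℕ}
    (hR : IsNormalForm d R) (hRc : ∀ q ∈ R, q.2 < c) (hc : 1 ≤ c) (hcd : c ≤ d)
    (hdt : d < t) :
    HasNormalForm n (numGens R + (d + 1 - c)) t (blocksProd n R * block n d c) := by
  rw [← blocksProd_append_singleton, ← numGens_append_singleton]
  exact hasNormalForm_blocksProd (isNormalForm_append_singleton.2 ⟨hR, hRc, hc, hcd, hdt⟩)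

theorem hasNormalForm_blocksProd_mul_block_of_top_lt {R : List (ℕ × ℕ)} {c d : ℕ}
    (hR : IsNormalForm d R) (hc : 1 ≤ c) (hd : d < n) :
    HasNormalForm n (numGens R + (d + 1 - c)) (d + 1) (blocksProd n R * block n d c) := by
  induction hN : numGens R + (d + 1 - c) using Nat.strong_induction_on generalizing R c d with
  | _ N ih =>
    subst hN
    by_cases hdc : d < c
    · rw [block_of_lt hdc, mul_one]
      exact (hasNormalForm_blocksProd hR).mono le_self_add d.le_succ
    push Not at hdc
    obtain rfl | ⟨S, ⟨b, a⟩, rfl⟩ := R.eq_nil_or_concat'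
    · exact hasNormalForm_blocksProd_mul_block_of_bot_lt hR (by simp) hc hdc d.lt_succ_self
    obtain ⟨hS, hSa, ha, hab, hbd⟩ := isNormalForm_append_singleton.1 hR
    have hlen := numGens_append_singleton S b a
    by_cases hac : a < c
    · refine hasNormalForm_blocksProd_mul_block_of_bot_lt hR ?_ hc hdc d.lt_succ_self
      intro q hq
      rcases List.mem_append.1 hq with hq | hq
      · exact (hSa q hq).trans hac
      · rw [List.mem_singleton.1 hq]
        exact hac
    push Not at hac
    rw [blocksProd_append_singleton, mul_assoc,
      block_mul_block_of_le_of_lt ha hac hab (hab.trans_lt hbd) hd, ← mul_assoc]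
    refine (ih _ (by omega) hS hc (by omega) rfl).mul fun R hR hlenR => ?_
    exact (ih _ (by omega) (hR.mono hbd) (by omega) hd rfl).mono (by omega) le_rfl

theorem hasNormalForm_blocksProd_mul_block {R : List (ℕ × ℕ)} {c d t : ℕ}
    (hR : IsNormalForm t R) (hdt : d < t) (hc : 1 ≤ c) (htn : t ≤ n) :
    HasNormalForm n (numGens R + (d + 1 - c)) t (blocksProd n R * block n d c) := by
  induction hN : numGens R + (d + 1 - c) using Nat.strong_induction_on generalizing R c d t with
  | _ N ih =>
    subst hN
    by_cases hdc : d < c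
    · rw [block_of_lt hdc, mul_one]
      exact (hasNormalForm_blocksProd hR).mono le_self_add le_rfl
    push Not at hdc
    obtain rfl | ⟨S, ⟨b, a⟩, rfl⟩ := R.eq_nil_or_concat'
    · exact (hasNormalForm_blocksProd_mul_block_of_top_lt (isNormalForm_nil d) hc
        (by omega)).mono le_rfl hdt
    obtain ⟨hS, hSa, ha, hab, hbt⟩ := isNormalForm_append_singleton.1 hR
    have hlen := numGens_append_singleton S b a
    by_cases hbd : b < d
    · exact (hasNormalForm_blocksProd_mul_block_of_top_lt
        (isNormalForm_append_singleton.2 ⟨hS, hSa, ha, hab, hbd⟩) hc (by omega)).mono le_rfl hdt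
    push Not at hbd
    rw [blocksProd_append_singleton, mul_assoc]
    rcases lt_trichotomy a d with had | rfl | hda
    · obtain ⟨e, rfl⟩ : ∃ e, d = e + 2 := ⟨d - 2, by omega⟩
      rw [block_mul_block_add_two (by omega) hdc hbd (by omega), ← mul_assoc]
      refine (ih _ (by omega) hS (by omega) ha (by omega) rfl).mul fun R hR hlenR => ?_
      exact (ih _ (by omega) (hR.mono hbt.le) hbt hc htn rfl).mono (by omega) le_rfl
    · rw [block_mul_block_eq_cK_mul hc hdc hbd (by omega), (commute_cK_block b c).eq,
        ← mul_assoc]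
      exact (ih _ (by omega) (hS.mono hbt.le) hbt hc htn rfl).mul_cK.mono (by omega) le_rfl
    -- Now `d < a`: the word does not get shorter, but the block with top `b` is appended last.
    by_cases hda' : a = d + 1
    · subst hda'
      rw [block_mul_block_consecutive (by omega) hbd]
      exact (hasNormalForm_blocksProd_mul_block_of_top_lt hS hc (by omega)).mono (by omega) hbt
    rw [(commute_block_block (Or.inr (by omega))).eq, ← mul_assoc]
    refine (ih _ (by omega) hS (by omega) hc (by omega) rfl).mul fun R hR hlenR => ?_
    exact (hasNormalForm_blocksProd_mul_block_of_top_lt hR ha (by omega)).mono (by omega) hbt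

theorem exists_hasNormalForm (x : Kn n) : ∃ k, HasNormalForm n k n x := by
  induction x using Submonoid.induction_of_closure_eq_top_right
      (PresentedMonoid.closure_range_of (KnRel n)) with
  | one => exact ⟨0, hasNormalForm_blocksProd (isNormalForm_nil n)⟩
  | mul_right x y hy ih =>
    obtain ⟨g, rfl⟩ := hy
    obtain ⟨k, hk⟩ := ih
    cases g with
    | c => exact ⟨k, hk.mul_cK⟩
    | h i h1 h2 =>
      refine ⟨k + 1, hk.mul fun R hR hlenR => ?_⟩
      have := hasNormalForm_blocksProd_mul_block (n := n) hR h2 h1 le_rfl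
      rw [block_self, hT_of_valid h1 h2] at this
      exact this.mono (by omega) le_rfl

end Kn

theorem Kn.jones_normal_form_exists_general (n : ℕ) (x : Kn n) :
    ∃ (l : ℕ) (ps : List (ℕ × ℕ)),
      (∀ q ∈ ps, 1 ≤ q.2 ∧ q.2 ≤ q.1 ∧ q.1 < n) ∧
      List.Pairwise (· < ·) (ps.map Prod.snd) ∧
      List.Pairwise (· < ·) (ps.map Prod.fst) ∧
      x = cK n ^ l * (ps.map fun q => block n q.1 q.2).prod := by
  obtain ⟨-, l, ps, ⟨hq, hsnd, hfst⟩, -, hx⟩ := Kn.exists_hasNormalForm x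
  exact ⟨l, ps, hq, hsnd, hfst, hx⟩

/-- Normal Form Lemma for `K_n`: every element of `K_n` is equal to an element in Jones
normal form `c^l · h_{[b₁,a₁]} ⋯ h_{[b_k,a_k]}` with `l, k ≥ 0`, where `1 ≤ a_q ≤ b_q ≤ n - 1`
for each `q`, `a₁ < … < a_k` and `b₁ < … < b_k` (the empty product being `1`). -/
theorem Kn.jones_normal_form_exists (n : ℕ) (hn : 1 ≤ n) (x : Kn n) :
    ∃ (l : ℕ) (ps : List (ℕ × ℕ)),
      (∀ q ∈ ps, 1 ≤ q.2 ∧ q.2 ≤ q.1 ∧ q.1 < n) ∧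
      List.Pairwise (· < ·) (ps.map Prod.snd) ∧
      List.Pairwise (· < ·) (ps.map Prod.fst) ∧
      x = cK n ^ l * (ps.map fun q => block n q.1 q.2).prod :=
  Kn.jones_normal_form_exists_general n x
end

section
/- (Balance Lemma) Let t and u be words in the free monoid on the generators δ_k, γ_k, and let ≈ be the smallest monoid congruence on this free monoid containing the defining relations of J_ω together with the pair (t, u). If w_1 ≈ w_2, then there is a natural number m with β(w_1, w_2) = m·β(t, u). -/
/-- The defining relations of the monoid `J_ω`: those of `L_ω` together with
`δ_k γ_k = 1` for every positive integer `k`. -/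
def JRel (w₁ w₂ : LWord) : Prop :=
  LRel w₁ w₂ ∨ ∃ k : ℕ+, w₁ = cupW k * capW k ∧ w₂ = 1

/-- The smallest monoid congruence containing the defining relations of `J_ω`. -/
def JCon : Con LWord := conGen JRel

/-- The smallest monoid congruence containing the defining relations of `J_ω`
together with the extra pair `(t, u)`; its quotient is the monoid `X` obtained from the
presentation of `J_ω` by adding the relation `t = u`. -/
def XCon (t u : LWord) : Con LWord :=
  conGen fun w₁ w₂ => JRel w₁ w₂ ∨ (w₁ = t ∧ w₂ = u)

/-- The number of occurrences of cup generators `δ_k` in a word. -/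
def cups (w : LWord) : ℕ :=
  (FreeMonoid.toList w).countP fun g => match g with | .cup _ => true | .cap _ => false

/-- The number of occurrences of cap generators `γ_k` in a word. -/
def caps (w : LWord) : ℕ :=
  (FreeMonoid.toList w).countP fun g => match g with | .cup _ => false | .cap _ => true

/-- The balance of a pair of words:
`β(w₁, w₂) = |(cups w₁ − caps w₁) − (cups w₂ − caps w₂)|`. -/
def balance (w₁ w₂ : LWord) : ℕ :=
  (((cups w₁ : ℤ) - (caps w₁ : ℤ)) - ((cups w₂ : ℤ) - (caps w₂ : ℤ))).natAbs

/-!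
The excess `cups w - caps w` is additive under concatenation and every defining relation of
`J_ω` has equal excess on both sides. Hence congruence of excesses modulo
`excess t - excess u` is a monoid congruence containing the generating pairs of `≈`, so it
contains `≈`; taking absolute values of the resulting divisibility gives the lemma.
-/

def excess (w : LWord) : ℤ := cups w - caps w

lemma balance_eq_natAbs_sub_excess (w₁ w₂ : LWord) :
    balance w₁ w₂ = (excess w₁ - excess w₂).natAbs := rfl

@[simp] lemma excess_one : excess 1 = 0 := rfl

@[simp] lemma excess_cupW (k : ℕ+) : excess (cupW k) = 1 := rfl

@[simp] lemma excess_capW (k : ℕ+) : excess (capW k) = -1 := rfl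

@[simp] lemma excess_mul (a b : LWord) : excess (a * b) = excess a + excess b := by
  simp only [excess, cups, caps, FreeMonoid.toList_mul, List.countP_append]
  push_cast
  ring

lemma LRel.excess_eq {a b : LWord} (h : LRel a b) : excess a = excess b := by
  cases h <;> simp

lemma JRel.excess_eq {a b : LWord} (h : JRel a b) : excess a = excess b := by
  rcases h with h | ⟨k, rfl, rfl⟩
  · exact h.excess_eq
  · simp

def excessModCon (n : ℤ) : Con LWord where
  r a b := excess a ≡ excess b [ZMOD n]
  iseqv := ⟨fun _ => Int.ModEq.refl _, Int.ModEq.symm, Int.ModEq.trans⟩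
  mul' h₁ h₂ := by simpa only [excess_mul] using h₁.add h₂

lemma XCon_le_excessModCon (t u : LWord) : XCon t u ≤ excessModCon (excess t - excess u) := by
  refine Con.conGen_le.2 ?_
  rintro a b (hab | ⟨rfl, rfl⟩)
  · show excess a ≡ excess b [ZMOD _]
    rw [hab.excess_eq]
  · exact Int.modEq_iff_dvd.2 (dvd_sub_comm.1 dvd_rfl)

/-- Balance Lemma: if `≈` is the smallest monoid congruence on the free monoid on the cups
and caps containing the defining relations of `J_ω` together with the pair `(t, u)`, and
`w₁ ≈ w₂`, then `β(w₁, w₂) = m · β(t, u)` for some natural number `m`. -/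
theorem balance_lemma (t u w₁ w₂ : LWord) (h : XCon t u w₁ w₂) :
    ∃ m : ℕ, balance w₁ w₂ = m * balance t u := by
  have hmod : excess w₁ ≡ excess w₂ [ZMOD excess t - excess u] := XCon_le_excessModCon t u h
  obtain ⟨m, hm⟩ := Int.natAbs_dvd_natAbs.2 (Int.modEq_iff_dvd.1 hmod.symm)
  exact ⟨m, by rw [balance_eq_natAbs_sub_excess, hm, balance_eq_natAbs_sub_excess, mul_comm]⟩
end

section
/- (Maximality of J_ω) Let t and u be words in the free monoid on the generators δ_k, γ_k whose images in J_ω are distinct, and let X be the monoid presented by the generators and defining relations of J_ω together with the additional relation t = u. Then X is isomorphic, as a monoid, to the additive monoid of integers modulo β(t, u) — that is, to (ℤ, +) when β(t, u) = 0, and to ℤ/nℤ when β(t, u) = n > 0. -/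
/-!
Every word is equivalent in `J_ω` to a normal form `γ_{a₁} ⋯ γ_{aₘ} δ_{bₙ} ⋯ δ_{b₁}` with
`a₁ > ⋯ > aₘ` and `b₁ > ⋯ > bₙ`, obtained by letting each new letter travel through the word
along the defining relations. The relations are invariant under turning diagrams upside down, so
multiplying by a cup on the left is handled like multiplying by a cap on the right.

If a congruence containing the relations of `J_ω` identifies two distinct normal forms, multiplying
both by a suitable `δ_j` on the left or `γ_j` on the right strips an outermost letter while keeping
the two sides distinct, until some `γ_a δ_b = 1` is forced. Then all `δ_m` become one unit with
inverse `γ_m`, so `X` is cyclic, generated by `δ₁`, and `w` equals `δ₁ ^ (cups w - caps w)`.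
The relation `t = u` makes the order of `δ₁` divide `β(t, u)`, and the homomorphism
`w ↦ (cups w - caps w) mod β(t, u)` shows that it is exactly `β(t, u)`.
-/

namespace JOmega

/-- `δ n` and `γ n` stand for the paper's `δ_{n+1}` and `γ_{n+1}`. -/
def δ (n : ℕ) : LWord := cupW n.succPNat

def γ (n : ℕ) : LWord := capW n.succPNat

lemma cupW_eq_δ (k : ℕ+) : cupW k = δ k.natPred := by rw [δ, PNat.succPNat_natPred]

lemma capW_eq_γ (k : ℕ+) : capW k = γ k.natPred := by rw [γ, PNat.succPNat_natPred]

lemma JCon.of_lRel {x y : LWord} (h : LRel x y) : JCon x y := ConGen.Rel.of _ _ (Or.inl h)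

lemma cup_mul_cup {k l : ℕ} (h : l ≤ k) : JCon (δ k * δ l) (δ l * δ (k + 2)) :=
  JCon.of_lRel (LRel.cup (Nat.succPNat_le_succPNat.2 h))

lemma cap_mul_cap {k l : ℕ} (h : l ≤ k) : JCon (γ l * γ k) (γ (k + 2) * γ l) :=
  JCon.of_lRel (LRel.cap (Nat.succPNat_le_succPNat.2 h))

lemma cup_mul_cap_add_two {k l : ℕ} (h : l ≤ k) : JCon (δ l * γ (k + 2)) (γ k * δ l) :=
  JCon.of_lRel (LRel.cupcap₁ (Nat.succPNat_le_succPNat.2 h))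

lemma cup_add_two_mul_cap {k l : ℕ} (h : l ≤ k) : JCon (δ (k + 2) * γ l) (γ l * δ k) :=
  JCon.of_lRel (LRel.cupcap₂ (Nat.succPNat_le_succPNat.2 h))

lemma cup_mul_cap_succ (k : ℕ) : JCon (δ k * γ (k + 1)) 1 :=
  JCon.of_lRel (LRel.cupcap₃ k.succPNat)

lemma cup_succ_mul_cap (k : ℕ) : JCon (δ (k + 1) * γ k) 1 :=
  JCon.of_lRel (LRel.cupcap₃' k.succPNat)

lemma cup_mul_cap_self (k : ℕ) : JCon (δ k * γ k) 1 :=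
  ConGen.Rel.of _ _ (Or.inr ⟨k.succPNat, rfl, rfl⟩)

lemma cup_mul_cap_of_near {j k : ℕ} (h₁ : ¬ j + 2 ≤ k) (h₂ : ¬ k + 2 ≤ j) :
    JCon (δ k * γ j) 1 := by
  obtain rfl | rfl | rfl : j = k + 1 ∨ j = k ∨ k = j + 1 := by omega
  exacts [cup_mul_cap_succ _, cup_mul_cap_self _, cup_succ_mul_cap _]

def flipGen : LGen → LGen
  | .cup k => .cap k
  | .cap k => .cup k

/-- Turning a diagram upside down reverses its word and exchanges cups with caps. -/
def mirror (w : LWord) : LWord := FreeMonoid.map flipGen (FreeMonoid.reverse w)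

@[simp] lemma mirror_one : mirror 1 = 1 := rfl

@[simp] lemma mirror_mul (x y : LWord) : mirror (x * y) = mirror y * mirror x := by
  rw [mirror, FreeMonoid.reverse_mul, map_mul]; rfl

@[simp] lemma mirror_cupW (k : ℕ+) : mirror (cupW k) = capW k := rfl

@[simp] lemma mirror_capW (k : ℕ+) : mirror (capW k) = cupW k := rfl

@[simp] lemma mirror_δ (n : ℕ) : mirror (δ n) = γ n := rfl

@[simp] lemma mirror_γ (n : ℕ) : mirror (γ n) = δ n := rfl

lemma JRel.mirror {x y : LWord} (h : JRel x y) : JRel (mirror x) (mirror y) := by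
  rcases h with h | ⟨k, rfl, rfl⟩
  · left
    cases h with
    | cup h => simpa using LRel.cap h
    | cap h => simpa using LRel.cup h
    | cupcap₁ h => simpa using LRel.cupcap₂ h
    | cupcap₂ h => simpa using LRel.cupcap₁ h
    | cupcap₃ k => simpa using LRel.cupcap₃' k
    | cupcap₃' k => simpa using LRel.cupcap₃ k
  · exact Or.inr ⟨k, by simp, rfl⟩

lemma JCon.mirror {x y : LWord} (h : JCon x y) : JCon (mirror x) (mirror y) := by
  change ConGen.Rel JRel x y at h
  induction h with
  | of x y h => exact ConGen.Rel.of _ _ (JRel.mirror h)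
  | refl x => exact JCon.refl _
  | symm _ ih => exact JCon.symm ih
  | trans _ _ ih₁ ih₂ => exact JCon.trans ih₁ ih₂
  | mul _ _ ih₁ ih₂ => simpa using JCon.mul ih₂ ih₁

/-! ### Normal forms -/

/-- A pair `(A, B)` of lists stands for the word `γ_{a₁} ⋯ γ_{aₘ} δ_{bₙ} ⋯ δ_{b₁}`; both lists are
kept strictly decreasing, so their heads are the outermost letters. -/
abbrev State : Type := List ℕ × List ℕ

def capsWord : List ℕ → LWord
  | [] => 1
  | a :: A => γ a * capsWord A

def cupsWord : List ℕ → LWord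
  | [] => 1
  | b :: B => cupsWord B * δ b

def word (s : State) : LWord := capsWord s.1 * cupsWord s.2

@[simp] lemma capsWord_append (A A' : List ℕ) : capsWord (A ++ A') = capsWord A * capsWord A' := by
  induction A with
  | nil => simp [capsWord]
  | cons a A ih => simp [capsWord, ih, mul_assoc]

@[simp] lemma capsWord_singleton (a : ℕ) : capsWord [a] = γ a := mul_one _

@[simp] lemma mirror_capsWord (A : List ℕ) : mirror (capsWord A) = cupsWord A := by
  induction A with
  | nil => rfl
  | cons a A ih => simp [capsWord, cupsWord, ih]

@[simp] lemma mirror_cupsWord (B : List ℕ) : mirror (cupsWord B) = capsWord B := by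
  induction B with
  | nil => rfl
  | cons b B ih => simp [capsWord, cupsWord, ih]

lemma mirror_word (s : State) : mirror (word s) = word s.swap := by
  simp [word]

def insertCup (k : ℕ) : List ℕ → List ℕ
  | [] => [k]
  | b :: B => if b < k then k :: b :: B else (b + 2) :: insertCup k B

/-- Acts on the reversal of a `γ`-part, an increasing list. -/
def insertCapRev (j : ℕ) : List ℕ → List ℕ
  | [] => [j]
  | a :: A => if j < a then j :: a :: A else a :: insertCapRev (j + 2) A

def insertCap (j : ℕ) (A : List ℕ) : List ℕ := (insertCapRev j A.reverse).reverse

/-- Moves `γ_j` leftwards through the `δ`-part `B`; the first component is the index of the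
`γ` that comes out on the left, if it is not cancelled on the way. -/
def pushCap (j : ℕ) : List ℕ → Option ℕ × List ℕ
  | [] => (some j, [])
  | b :: B =>
    if j + 2 ≤ b then ((pushCap j B).1, insertCup (b - 2) (pushCap j B).2)
    else if b + 2 ≤ j then ((pushCap (j - 2) B).1, b :: (pushCap (j - 2) B).2)
    else (none, B)

def absorbCap (A : List ℕ) : Option ℕ × List ℕ → State
  | (none, B) => (A, B)
  | (some i, B) => (insertCap i A, B)

def appendCap (j : ℕ) (s : State) : State := absorbCap s.1 (pushCap j s.2)

def prependCup (j : ℕ) (s : State) : State := (appendCap j s.swap).swap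

def step (s : State) : LGen → State
  | .cup k => (s.1, insertCup k.natPred s.2)
  | .cap k => appendCap k.natPred s

def normalForm (w : LWord) : State := w.toList.foldl step ([], [])

lemma cupsWord_mul_cup (k : ℕ) (B : List ℕ) :
    JCon (cupsWord B * δ k) (cupsWord (insertCup k B)) := by
  induction B with
  | nil => simpa [cupsWord, insertCup] using JCon.refl _
  | cons b B ih =>
    by_cases h : b < k
    · rw [insertCup, if_pos h]
      exact JCon.refl _
    · simp only [insertCup, h, if_false, cupsWord, mul_assoc]
      refine JCon.trans (JCon.mul (JCon.refl _) (cup_mul_cup (not_lt.1 h))) ?_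
      rw [← mul_assoc]
      exact JCon.mul ih (JCon.refl _)

lemma capsWord_reverse_mul_cap (j : ℕ) (A : List ℕ) :
    JCon (capsWord A.reverse * γ j) (capsWord (insertCapRev j A).reverse) := by
  induction A generalizing j with
  | nil => simpa [capsWord, insertCapRev] using JCon.refl _
  | cons a A ih =>
    by_cases h : j < a
    · simpa [insertCapRev, h, capsWord, mul_assoc] using JCon.refl _
    · simp only [insertCapRev, h, if_false, List.reverse_cons, capsWord_append, capsWord_singleton,
        mul_assoc]
      refine JCon.trans (JCon.mul (JCon.refl _) (cap_mul_cap (not_lt.1 h))) ?_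
      rw [← mul_assoc]
      exact JCon.mul (ih (j + 2)) (JCon.refl _)

lemma capsWord_mul_cap (j : ℕ) (A : List ℕ) :
    JCon (capsWord A * γ j) (capsWord (insertCap j A)) := by
  simpa [insertCap] using capsWord_reverse_mul_cap j A.reverse

lemma cupsWord_mul_cap (j : ℕ) (B : List ℕ) :
    JCon (cupsWord B * γ j) ((pushCap j B).1.elim 1 γ * cupsWord (pushCap j B).2) := by
  induction B generalizing j with
  | nil => simpa [cupsWord, pushCap] using JCon.refl _
  | cons b B ih =>
    simp only [cupsWord, pushCap, mul_assoc]
    split_ifs with h₁ h₂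
    · obtain ⟨k, rfl⟩ : ∃ k, b = k + 2 := ⟨b - 2, by omega⟩
      refine JCon.trans (JCon.mul (JCon.refl _) (cup_add_two_mul_cap (by omega : j ≤ k))) ?_
      rw [← mul_assoc, Nat.add_sub_cancel]
      refine JCon.trans (JCon.mul (ih j) (JCon.refl _)) ?_
      rw [mul_assoc]
      exact JCon.mul (JCon.refl _) (cupsWord_mul_cup k _)
    · obtain ⟨i, rfl⟩ : ∃ i, j = i + 2 := ⟨j - 2, by omega⟩
      refine JCon.trans (JCon.mul (JCon.refl _) (cup_mul_cap_add_two (by omega : b ≤ i))) ?_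
      rw [← mul_assoc, Nat.add_sub_cancel]
      show JCon _ ((pushCap i B).1.elim 1 γ * (cupsWord (pushCap i B).2 * δ b))
      rw [← mul_assoc]
      exact JCon.mul (ih i) (JCon.refl _)
    · simpa using JCon.mul (JCon.refl _) (cup_mul_cap_of_near h₁ h₂)

lemma word_mul_cap (j : ℕ) (s : State) : JCon (word s * γ j) (word (appendCap j s)) := by
  obtain ⟨A, B⟩ := s
  rw [word, mul_assoc]
  refine JCon.trans (JCon.mul (JCon.refl _) (cupsWord_mul_cap j B)) ?_
  rw [appendCap]
  rcases pushCap j B with ⟨_ | i, B'⟩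
  · simpa [absorbCap, word] using JCon.refl _
  · rw [← mul_assoc]
    exact JCon.mul (capsWord_mul_cap i A) (JCon.refl _)

lemma cup_mul_word (j : ℕ) (s : State) : JCon (δ j * word s) (word (prependCup j s)) := by
  simpa [prependCup, mirror_word] using JCon.mirror (word_mul_cap j s.swap)

lemma word_mul_of (s : State) (g : LGen) : JCon (word s * .of g) (word (step s g)) := by
  cases g with
  | cup k =>
    rw [← cupW, cupW_eq_δ, word, mul_assoc]
    exact JCon.mul (JCon.refl _) (cupsWord_mul_cup _ _)
  | cap k =>
    rw [← capW, capW_eq_γ]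
    exact word_mul_cap _ s

lemma jCon_normalForm (w : LWord) : JCon w (word (normalForm w)) := by
  suffices ∀ (l : List LGen) (s : State),
      JCon (word s * FreeMonoid.ofList l) (word (l.foldl step s)) by
    simpa [word, capsWord, cupsWord, normalForm] using this w.toList ([], [])
  intro l
  induction l with
  | nil => intro s; simpa using JCon.refl _
  | cons g l ih =>
    intro s
    rw [FreeMonoid.ofList_cons, ← mul_assoc, List.foldl_cons]
    exact JCon.trans (JCon.mul (word_mul_of s g) (JCon.refl _)) (ih _)

def IsNormal (s : State) : Prop := s.1.Pairwise (· > ·) ∧ s.2.Pairwise (· > ·)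

/-- Caps count twice: multiplying by a cup on the left removes a cap from one side and adds at
most one cup to the other. -/
def size (s : State) : ℕ := 2 * s.1.length + s.2.length

lemma lt_of_mem_insertCup {k c : ℕ} {B : List ℕ} (hk : k < c) (hB : ∀ y ∈ B, y + 2 < c) :
    ∀ x ∈ insertCup k B, x < c := by
  induction B with
  | nil => simpa [insertCup] using hk
  | cons b B ih =>
    simp only [List.forall_mem_cons] at hB
    unfold insertCup
    split_ifs
    · simp only [List.forall_mem_cons]
      exact ⟨hk, by omega, fun y hy => by have := hB.2 y hy; omega⟩
    · exact List.forall_mem_cons.2 ⟨hB.1, ih hB.2⟩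

lemma insertCup_pairwise {k : ℕ} {B : List ℕ} (hB : B.Pairwise (· > ·)) :
    (insertCup k B).Pairwise (· > ·) := by
  induction B with
  | nil => simp [insertCup]
  | cons b B ih =>
    rw [List.pairwise_cons] at hB
    unfold insertCup
    split_ifs with h
    · exact List.Pairwise.cons (List.forall_mem_cons.2 ⟨h, fun y hy => (hB.1 y hy).trans h⟩)
        (List.Pairwise.cons hB.1 hB.2)
    · exact List.Pairwise.cons (lt_of_mem_insertCup (by omega)
        fun y hy => by have := hB.1 y hy; omega) (ih hB.2)

lemma length_insertCup (k : ℕ) (B : List ℕ) : (insertCup k B).length = B.length + 1 := by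
  induction B with
  | nil => rfl
  | cons b B ih =>
    unfold insertCup
    split_ifs <;> simp [ih]

lemma lt_of_mem_insertCapRev {j c : ℕ} {A : List ℕ} (hj : c < j) (hA : ∀ y ∈ A, c < y) :
    ∀ x ∈ insertCapRev j A, c < x := by
  induction A generalizing j with
  | nil => simpa [insertCapRev] using hj
  | cons a A ih =>
    simp only [List.forall_mem_cons] at hA
    unfold insertCapRev
    split_ifs
    · exact List.forall_mem_cons.2 ⟨hj, List.forall_mem_cons.2 hA⟩
    · exact List.forall_mem_cons.2 ⟨hA.1, ih (by omega) hA.2⟩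

lemma insertCapRev_pairwise {j : ℕ} {A : List ℕ} (hA : A.Pairwise (· < ·)) :
    (insertCapRev j A).Pairwise (· < ·) := by
  induction A generalizing j with
  | nil => simp [insertCapRev]
  | cons a A ih =>
    rw [List.pairwise_cons] at hA
    unfold insertCapRev
    split_ifs with h
    · exact List.Pairwise.cons (List.forall_mem_cons.2 ⟨h, fun y hy => h.trans (hA.1 y hy)⟩)
        (List.Pairwise.cons hA.1 hA.2)
    · exact List.Pairwise.cons (lt_of_mem_insertCapRev (by omega) hA.1) (ih hA.2)

lemma insertCap_pairwise {j : ℕ} {A : List ℕ} (hA : A.Pairwise (· > ·)) :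
    (insertCap j A).Pairwise (· > ·) :=
  List.pairwise_reverse.2 (insertCapRev_pairwise (List.pairwise_reverse.2 hA))

lemma length_insertCapRev (j : ℕ) (A : List ℕ) : (insertCapRev j A).length = A.length + 1 := by
  induction A generalizing j with
  | nil => rfl
  | cons a A ih =>
    unfold insertCapRev
    split_ifs <;> simp [ih]

lemma length_insertCap (j : ℕ) (A : List ℕ) : (insertCap j A).length = A.length + 1 := by
  simp [insertCap, length_insertCapRev]

lemma insertCapRev_left_injective (A : List ℕ) : Function.Injective (insertCapRev · A) := by
  intro j j' h
  induction A generalizing j j' with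
  | nil => simpa [insertCapRev] using h
  | cons a A ih =>
    simp only [insertCapRev] at h
    split_ifs at h with h₁ h₂ h₂
    · exact (List.cons.inj h).1
    · exact absurd (List.cons.inj h).1 h₁.ne
    · exact absurd (List.cons.inj h).1.symm h₂.ne
    · exact Nat.add_right_cancel (ih (List.cons.inj h).2)

lemma insertCap_left_injective (A : List ℕ) : Function.Injective (insertCap · A) :=
  fun _ _ h => insertCapRev_left_injective A.reverse (List.reverse_injective h)

lemma absorbCap_injective (A : List ℕ) : Function.Injective (absorbCap A) := by
  rintro ⟨_ | i, B⟩ ⟨_ | i', B'⟩ h <;> simp only [absorbCap, Prod.mk.injEq] at h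
  · rw [h.2]
  · simpa [length_insertCap] using congrArg List.length h.1
  · simpa [length_insertCap] using congrArg List.length h.1
  · rw [insertCap_left_injective A h.1, h.2]

lemma pushCap_cons_of_near {j b : ℕ} (B : List ℕ) (h₁ : ¬ j + 2 ≤ b) (h₂ : ¬ b + 2 ≤ j) :
    pushCap j (b :: B) = (none, B) := by
  simp [pushCap, h₁, h₂]

lemma length_pushCap (j : ℕ) (B : List ℕ) :
    (pushCap j B).2.length + (pushCap j B).1.elim 1 (fun _ => 0) = B.length := by
  induction B generalizing j with
  | nil => simp [pushCap]
  | cons b B ih =>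
    unfold pushCap
    split_ifs
    · simp only [length_insertCup, List.length_cons, ← ih j]
      omega
    · simp only [List.length_cons, ← ih (j - 2)]
      omega
    · simp

lemma pushCap_sublist {j : ℕ} {B : List ℕ} (hB : B.Pairwise (· > ·)) (hj : ∀ x ∈ B, x < j) :
    (pushCap j B).2.Sublist B := by
  induction B generalizing j with
  | nil => simp [pushCap]
  | cons b B ih =>
    rw [List.pairwise_cons] at hB
    have hb := hj b List.mem_cons_self
    unfold pushCap
    split_ifs
    · omega
    · exact (ih hB.2 fun x hx => by have := hB.1 x hx; omega).cons_cons b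
    · exact List.sublist_cons_self b B

lemma pushCap_pairwise {j : ℕ} {B : List ℕ} (hB : B.Pairwise (· > ·)) :
    (pushCap j B).2.Pairwise (· > ·) := by
  induction B generalizing j with
  | nil => simp [pushCap]
  | cons b B ih =>
    rw [List.pairwise_cons] at hB
    unfold pushCap
    split_ifs
    · exact insertCup_pairwise (ih hB.2)
    · exact (List.pairwise_cons.2 hB).sublist
        ((pushCap_sublist hB.2 fun x hx => by have := hB.1 x hx; omega).cons_cons b)
    · exact hB.2

lemma pushCap_succ_ne {j : ℕ} {B : List ℕ} (hB : B.Pairwise (· > ·)) (hj : ∀ x ∈ B, x < j) :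
    pushCap (j + 1) B ≠ pushCap j B := by
  induction B generalizing j with
  | nil => simp [pushCap]
  | cons b B ih =>
    rw [List.pairwise_cons] at hB
    have hb := hj b List.mem_cons_self
    unfold pushCap
    by_cases h : b + 2 ≤ j
    · have hlt : ∀ x ∈ B, x < j - 2 := fun x hx => by have := hB.1 x hx; omega
      rw [if_neg (by omega), if_pos (by omega), if_neg (by omega), if_pos h,
        show j + 1 - 2 = j - 2 + 1 by omega]
      intro heq
      simp only [Prod.mk.injEq, List.cons.injEq, true_and] at heq
      exact ih hB.2 hlt (Prod.ext heq.1 heq.2)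
    · rw [if_neg (by omega), if_pos (by omega), if_neg (by omega), if_neg h]
      intro heq
      have hmem : b ∈ B := by
        rw [← (Prod.mk.inj heq).2]
        exact List.mem_cons_self
      exact (hB.1 b hmem).false

lemma appendCap_isNormal {s : State} (hs : IsNormal s) (j : ℕ) : IsNormal (appendCap j s) := by
  obtain ⟨A, B⟩ := s
  have hB : (pushCap j B).2.Pairwise (· > ·) := pushCap_pairwise hs.2
  rw [appendCap]
  rcases hp : pushCap j B with ⟨_ | i, B'⟩ <;> rw [hp] at hB
  · exact ⟨hs.1, hB⟩
  · exact ⟨insertCap_pairwise hs.1, hB⟩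

lemma prependCup_isNormal {s : State} (hs : IsNormal s) (j : ℕ) : IsNormal (prependCup j s) :=
  (appendCap_isNormal ⟨hs.2, hs.1⟩ j).symm

lemma normalForm_isNormal (w : LWord) : IsNormal (normalForm w) := by
  suffices ∀ (l : List LGen) (s : State), IsNormal s → IsNormal (l.foldl step s) from
    this _ _ ⟨List.Pairwise.nil, List.Pairwise.nil⟩
  intro l
  induction l with
  | nil => exact fun _ hs => hs
  | cons g l ih =>
    intro s hs
    refine ih _ ?_
    cases g with
    | cup k => exact ⟨hs.1, insertCup_pairwise hs.2⟩
    | cap k => exact appendCap_isNormal hs _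

lemma appendCap_cons_of_near {j b : ℕ} (A B : List ℕ) (h₁ : ¬ j + 2 ≤ b) (h₂ : ¬ b + 2 ≤ j) :
    appendCap j (A, b :: B) = (A, B) := by
  simp [appendCap, pushCap_cons_of_near B h₁ h₂, absorbCap]

lemma prependCup_cons_of_near {j a : ℕ} (A B : List ℕ) (h₁ : ¬ j + 2 ≤ a) (h₂ : ¬ a + 2 ≤ j) :
    prependCup j (a :: A, B) = (A, B) := by
  simp [prependCup, appendCap_cons_of_near B A h₁ h₂]

lemma size_prependCup_le (j : ℕ) (s : State) : size (prependCup j s) ≤ size s + 1 := by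
  obtain ⟨A, B⟩ := s
  have hlen := length_pushCap j A
  simp only [prependCup, appendCap, Prod.swap_prod_mk]
  rcases hp : pushCap j A with ⟨_ | i, A'⟩ <;> rw [hp] at hlen <;>
    simp only [absorbCap, Prod.swap_prod_mk, size, length_insertCap, Option.elim] at hlen ⊢ <;>
    omega

/-! ### Separating distinct normal forms -/

lemma forall_mem_cons_lt {a c : ℕ} {A : List ℕ} (hA : (a :: A).Pairwise (· > ·)) (h : a < c) :
    ∀ x ∈ a :: A, x < c :=
  List.forall_mem_cons.2 ⟨h, fun _ hx => (List.rel_of_pairwise_cons hA hx).trans h⟩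

lemma IsNormal.tail_caps {a : ℕ} {A B : List ℕ} (h : IsNormal (a :: A, B)) : IsNormal (A, B) :=
  ⟨h.1.of_cons, h.2⟩

lemma exists_cupsWord_mul_jCon_one (B : List ℕ) : ∃ z, JCon (cupsWord B * z) 1 := by
  induction B with
  | nil => exact ⟨1, by simpa [cupsWord] using JCon.refl 1⟩
  | cons b B ih =>
    obtain ⟨z, hz⟩ := ih
    refine ⟨γ (b + 1) * z, JCon.trans ?_ hz⟩
    rw [cupsWord, mul_assoc, ← mul_assoc (δ b)]
    simpa using JCon.mul (JCon.refl _) (JCon.mul (cup_mul_cap_succ b) (JCon.refl z))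

def Collapses (θ : Con LWord) : Prop := ∃ a b : ℕ, θ (γ a * δ b) 1

def CollapsesBelow (θ : Con LWord) (n : ℕ) : Prop :=
  ∀ s₁ s₂ : State, size s₁ + size s₂ < n → IsNormal s₁ → IsNormal s₂ → s₁ ≠ s₂ →
    θ (word s₁) (word s₂) → Collapses θ

section Separation

variable {θ : Con LWord} (hθ : JCon ≤ θ)

include hθ

lemma mk_mul_mk_eq_one {x y : LWord} (h : JCon (x * y) 1) : (x : θ.Quotient) * y = 1 :=
  θ.eq.2 (hθ h)

/-- `γ_a` has the left inverse `δ_{a+1}`, so a right inverse makes it a unit. -/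
lemma collapses_of_cap_mul {a : ℕ} {x y z : LWord} (h : θ (γ a * x) y)
    (hyz : JCon (y * z) 1) : Collapses θ := by
  refine ⟨a, a + 1, θ.eq.1 ?_⟩
  have hright : (γ a : θ.Quotient) * (x * z) = 1 := by
    rw [← mul_assoc, ← Con.coe_mul, θ.eq.2 h]
    exact mk_mul_mk_eq_one hθ hyz
  rw [Con.coe_mul, Con.coe_one,
    left_inv_eq_right_inv (mk_mul_mk_eq_one hθ (cup_succ_mul_cap a)) hright]
  exact hright

lemma rel_appendCap {s₁ s₂ : State} (h : θ (word s₁) (word s₂)) (j : ℕ) :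
    θ (word (appendCap j s₁)) (word (appendCap j s₂)) :=
  θ.trans (θ.symm (hθ (word_mul_cap j s₁))) (θ.trans (θ.mul h (θ.refl _)) (hθ (word_mul_cap j s₂)))

lemma rel_prependCup {s₁ s₂ : State} (h : θ (word s₁) (word s₂)) (j : ℕ) :
    θ (word (prependCup j s₁)) (word (prependCup j s₂)) :=
  θ.trans (θ.symm (hθ (cup_mul_word j s₁))) (θ.trans (θ.mul (θ.refl _) h) (hθ (cup_mul_word j s₂)))

/-- Both `δ_a` and `δ_{a+1}` cancel the leading `γ_a` of the first side, but they act
differently on the second side, so one of them keeps the two sides apart. -/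
lemma collapses_of_capsHead_gt {n a : ℕ} {A₁ B₁ : List ℕ} {s₂ : State} (IH : CollapsesBelow θ n)
    (hn : size (a :: A₁, B₁) + size s₂ ≤ n) (h₁ : IsNormal (a :: A₁, B₁)) (h₂ : IsNormal s₂)
    (hlt : ∀ x ∈ s₂.1, x < a) (h : θ (word (a :: A₁, B₁)) (word s₂)) : Collapses θ := by
  have hcancel {j : ℕ} (hj : j = a ∨ j = a + 1) : prependCup j (a :: A₁, B₁) = (A₁, B₁) :=
    prependCup_cons_of_near _ _ (by omega) (by omega)
  have hsep : prependCup (a + 1) s₂ ≠ prependCup a s₂ := fun heq =>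
    pushCap_succ_ne h₂.1 hlt (absorbCap_injective _ (Prod.swap_injective heq))
  obtain ⟨j, hj, hne⟩ : ∃ j, (j = a ∨ j = a + 1) ∧ (A₁, B₁) ≠ prependCup j s₂ := by
    by_cases ha : (A₁, B₁) = prependCup a s₂
    · exact ⟨a + 1, Or.inr rfl, ha ▸ hsep.symm⟩
    · exact ⟨a, Or.inl rfl, ha⟩
  refine IH _ _ ?_ h₁.tail_caps (prependCup_isNormal h₂ j) hne ?_
  · have := size_prependCup_le j s₂
    simp only [size, List.length_cons] at this hn ⊢
    omega
  · simpa only [hcancel hj] using rel_prependCup hθ h j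

/-- Both `γ_b` and `γ_{b+1}` cancel the last `δ_b` of the second side, but they act
differently on the first side, so one of them keeps the two sides apart. -/
lemma collapses_of_cupsHead_gt {n b : ℕ} {B₁ B₂ : List ℕ} (IH : CollapsesBelow θ n)
    (hn : B₁.length + (b :: B₂).length ≤ n) (h₁ : B₁.Pairwise (· > ·))
    (h₂ : (b :: B₂).Pairwise (· > ·)) (hlt : ∀ x ∈ B₁, x < b)
    (h : θ (word ([], B₁)) (word ([], b :: B₂))) : Collapses θ := by
  have hcancel {j : ℕ} (hj : j = b ∨ j = b + 1) : appendCap j ([], b :: B₂) = ([], B₂) :=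
    appendCap_cons_of_near _ _ (by omega) (by omega)
  have hsep : appendCap (b + 1) ([], B₁) ≠ appendCap b ([], B₁) := fun heq =>
    pushCap_succ_ne h₁ hlt (absorbCap_injective _ heq)
  obtain ⟨j, hj, hne⟩ : ∃ j, (j = b ∨ j = b + 1) ∧ appendCap j ([], B₁) ≠ ([], B₂) := by
    by_cases hb : appendCap b ([], B₁) = ([], B₂)
    · exact ⟨b + 1, Or.inr rfl, hb ▸ hsep⟩
    · exact ⟨b, Or.inl rfl, hb⟩
  have hrel := rel_appendCap hθ h j
  rw [hcancel hj] at hrel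
  have hlen := length_pushCap j B₁
  rw [appendCap] at hne hrel
  rcases hp : pushCap j B₁ with ⟨_ | i, B'⟩ <;> rw [hp] at hne hrel hlen
  · refine IH _ _ ?_ ⟨List.Pairwise.nil, ?_⟩ ⟨List.Pairwise.nil, h₂.of_cons⟩ hne hrel
    · simp only [size, absorbCap, List.length_cons, List.length_nil, Option.elim] at hn hlen ⊢
      omega
    · simpa [hp, absorbCap] using pushCap_pairwise (j := j) h₁
  · obtain ⟨z, hz⟩ := exists_cupsWord_mul_jCon_one B₂
    exact collapses_of_cap_mul hθ (x := cupsWord B')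
      (by simpa [absorbCap, insertCap, insertCapRev, word, capsWord] using hrel) hz

lemma collapses_of_caps_nil {n : ℕ} {B₁ B₂ : List ℕ} (IH : CollapsesBelow θ n)
    (hn : B₁.length + B₂.length ≤ n) (h₁ : B₁.Pairwise (· > ·)) (h₂ : B₂.Pairwise (· > ·))
    (hne : B₁ ≠ B₂) (h : θ (word ([], B₁)) (word ([], B₂))) : Collapses θ := by
  rcases B₁ with _ | ⟨b₁, B₁⟩ <;> rcases B₂ with _ | ⟨b₂, B₂⟩
  · exact absurd rfl hne
  · exact collapses_of_cupsHead_gt hθ IH hn .nil h₂ (by simp) h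
  · exact collapses_of_cupsHead_gt hθ IH (by simpa [add_comm] using hn) .nil h₁ (by simp) (θ.symm h)
  · rcases lt_trichotomy b₁ b₂ with hb | rfl | hb
    · exact collapses_of_cupsHead_gt hθ IH hn h₁ h₂ (forall_mem_cons_lt h₁ hb) h
    · have hrel := rel_appendCap hθ h (b₁ + 1)
      rw [appendCap_cons_of_near _ _ (by omega) (by omega),
        appendCap_cons_of_near _ _ (by omega) (by omega)] at hrel
      refine IH _ _ ?_ ⟨.nil, h₁.of_cons⟩ ⟨.nil, h₂.of_cons⟩ (by simpa using hne) hrel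
      simp only [size, List.length_cons, List.length_nil] at hn ⊢
      omega
    · exact collapses_of_cupsHead_gt hθ IH (by simpa [add_comm] using hn) h₂ h₁
        (forall_mem_cons_lt h₂ hb) (θ.symm h)

theorem collapses_of_rel_of_ne {s₁ s₂ : State} (h₁ : IsNormal s₁) (h₂ : IsNormal s₂)
    (hne : s₁ ≠ s₂) (h : θ (word s₁) (word s₂)) : Collapses θ := by
  induction hn : size s₁ + size s₂ using Nat.strong_induction_on generalizing s₁ s₂ with
  | _ n IH =>
  replace IH : CollapsesBelow θ n := fun s₁ s₂ hlt h₁ h₂ hne h => IH _ hlt h₁ h₂ hne h rfl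
  rcases s₁ with ⟨_ | ⟨a₁, A₁⟩, B₁⟩ <;> rcases s₂ with ⟨_ | ⟨a₂, A₂⟩, B₂⟩
  · refine collapses_of_caps_nil hθ (B₁ := B₁) (B₂ := B₂) IH ?_ h₁.2 h₂.2 (by simpa using hne) h
    simp only [size, List.length_nil] at hn
    omega
  · exact collapses_of_capsHead_gt hθ IH (by omega) h₂ h₁ (by simp) (θ.symm h)
  · exact collapses_of_capsHead_gt hθ IH hn.le h₁ h₂ (by simp) h
  · rcases lt_trichotomy a₁ a₂ with ha | rfl | ha
    · exact collapses_of_capsHead_gt hθ IH (by omega) h₂ h₁ (forall_mem_cons_lt h₁.1 ha)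
        (θ.symm h)
    · have hrel := rel_prependCup hθ h (a₁ + 1)
      rw [prependCup_cons_of_near _ _ (by omega) (by omega),
        prependCup_cons_of_near _ _ (by omega) (by omega)] at hrel
      refine IH _ _ ?_ h₁.tail_caps h₂.tail_caps (by simpa using hne) hrel
      simp only [size, List.length_cons] at hn ⊢
      omega
    · exact collapses_of_capsHead_gt hθ IH hn.le h₁ h₂ (forall_mem_cons_lt h₂.1 ha) h

lemma collapses_of_rel_of_not_jCon {t u : LWord} (htu : θ t u) (hne : ¬ JCon t u) :
    Collapses θ := by
  refine collapses_of_rel_of_ne hθ (normalForm_isNormal t) (normalForm_isNormal u) ?_ ?_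
  · intro h
    exact hne (JCon.trans (jCon_normalForm t) (h ▸ JCon.symm (jCon_normalForm u)))
  · exact θ.trans (θ.symm (hθ (jCon_normalForm t))) (θ.trans htu (hθ (jCon_normalForm u)))

end Separation

/-! ### The collapsed quotient -/

def weight : LWord →* Multiplicative ℤ :=
  FreeMonoid.lift fun
    | .cup _ => .ofAdd 1
    | .cap _ => .ofAdd (-1)

lemma toAdd_weight (w : LWord) : (weight w).toAdd = cups w - caps w := by
  induction w using FreeMonoid.inductionOn' with
  | one => rfl
  | of_mul g w ih =>
    rw [map_mul, toAdd_mul, ih]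
    cases g <;> simp [weight, cups, caps] <;> ring

lemma weight_eq_of_jCon {x y : LWord} (h : JCon x y) : weight x = weight y := by
  refine (Con.conGen_le.2 (fun x y h => ?_) : JCon ≤ Con.ker weight) h
  rcases h with h | ⟨k, rfl, rfl⟩
  · cases h <;> simp [weight, cupW, capW]
  · simp [weight, cupW, capW]

lemma weight_surjective : Function.Surjective weight := by
  intro m
  obtain ⟨k, hk | hk⟩ := Int.eq_nat_or_neg m.toAdd <;> rw [← ofAdd_toAdd m, hk]
  · exact ⟨δ 0 ^ k, by simp [weight, δ, cupW, ← ofAdd_nsmul]⟩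
  · exact ⟨γ 0 ^ k, by simp [weight, γ, capW, ← ofAdd_nsmul]⟩

section Cyclic

variable {θ : Con LWord} (hθ : JCon ≤ θ)
include hθ

lemma cup_succ_eq_and_cap_succ_eq {m : ℕ}
    (h : (γ m : θ.Quotient) * δ m = 1 ∨ (γ (m + 1) : θ.Quotient) * δ (m + 1) = 1) :
    (δ (m + 1) : θ.Quotient) = δ m ∧ (γ (m + 1) : θ.Quotient) = γ m := by
  have h₁ : (δ m : θ.Quotient) * γ (m + 1) = 1 := mk_mul_mk_eq_one hθ (cup_mul_cap_succ m)
  have h₂ : (δ (m + 1) : θ.Quotient) * γ m = 1 := mk_mul_mk_eq_one hθ (cup_succ_mul_cap m)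
  rcases h with h | h
  · exact ⟨left_inv_eq_right_inv h₂ h, (left_inv_eq_right_inv h h₁).symm⟩
  · exact ⟨(left_inv_eq_right_inv h₁ h).symm, left_inv_eq_right_inv h h₂⟩

/-- Once one `γ_a δ_b` is trivial, `γ_b` is inverse to `δ_b`, and invertibility of `δ_m`
spreads to all `m` along the relations `δ_m γ_{m+1} = δ_{m+1} γ_m = 1`. -/
lemma Collapses.cap_mul_cup (hc : Collapses θ) (m : ℕ) : (γ m : θ.Quotient) * δ m = 1 := by
  obtain ⟨a, b, hab⟩ := hc
  have hb : (γ b : θ.Quotient) * δ b = 1 := by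
    have hab' : (γ a : θ.Quotient) * δ b = 1 := θ.eq.2 hab
    rwa [left_inv_eq_right_inv hab' (mk_mul_mk_eq_one hθ (cup_mul_cap_self b))] at hab'
  have hsucc (k : ℕ) :
      (γ k : θ.Quotient) * δ k = 1 ↔ (γ (k + 1) : θ.Quotient) * δ (k + 1) = 1 := by
    constructor <;> intro h
    · obtain ⟨hd, hg⟩ := cup_succ_eq_and_cap_succ_eq hθ (Or.inl h)
      rwa [hd, hg]
    · obtain ⟨hd, hg⟩ := cup_succ_eq_and_cap_succ_eq hθ (Or.inr h)
      rwa [← hd, ← hg]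
  have hzero (k : ℕ) : (γ k : θ.Quotient) * δ k = 1 ↔ (γ 0 : θ.Quotient) * δ 0 = 1 := by
    induction k with
    | zero => rfl
    | succ k ih => exact (hsucc k).symm.trans ih
  exact (hzero m).2 ((hzero b).1 hb)

lemma Collapses.cup_eq_and_cap_eq (hc : Collapses θ) (m : ℕ) :
    (δ m : θ.Quotient) = δ 0 ∧ (γ m : θ.Quotient) = γ 0 := by
  induction m with
  | zero => exact ⟨rfl, rfl⟩
  | succ m ih =>
    obtain ⟨hd, hg⟩ := cup_succ_eq_and_cap_succ_eq hθ (Or.inl (hc.cap_mul_cup hθ m))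
    exact ⟨hd.trans ih.1, hg.trans ih.2⟩

lemma Collapses.exists_mk_eq_zpow (hc : Collapses θ) :
    ∃ U : θ.Quotientˣ, ∀ w : LWord, (w : θ.Quotient) = ↑(U ^ (weight w).toAdd) := by
  let U : θ.Quotientˣ :=
    ⟨δ 0, γ 0, mk_mul_mk_eq_one hθ (cup_mul_cap_self 0), hc.cap_mul_cup hθ 0⟩
  refine ⟨U, fun w => DFunLike.congr_fun (?_ : θ.mk' = ((Units.coeHom _).comp
    ((zpowersHom _ U).comp weight))) w⟩
  refine FreeMonoid.hom_eq fun g => ?_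
  cases g with
  | cup k =>
    have hk := (hc.cup_eq_and_cap_eq hθ k.natPred).1
    rw [← cupW_eq_δ] at hk
    simpa [weight, U, cupW] using hk
  | cap k =>
    have hk := (hc.cup_eq_and_cap_eq hθ k.natPred).2
    rw [← capW_eq_γ] at hk
    simpa [weight, U, capW] using hk

end Cyclic

def weightMod (n : ℕ) : LWord →* Multiplicative (ZMod n) :=
  (AddMonoidHom.toMultiplicative (Int.castAddHom (ZMod n))).comp weight

lemma weightMod_apply (n : ℕ) (w : LWord) :
    weightMod n w = .ofAdd ((weight w).toAdd : ZMod n) := rfl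

lemma weightMod_surjective (n : ℕ) : Function.Surjective (weightMod n) := by
  intro m
  obtain ⟨k, hk⟩ := ZMod.intCast_surjective m.toAdd
  obtain ⟨w, hw⟩ := weight_surjective (.ofAdd k)
  exact ⟨w, by rw [weightMod_apply, hw, toAdd_ofAdd, hk, ofAdd_toAdd]⟩

lemma balance_eq_natAbs (t u : LWord) :
    balance t u = ((weight t).toAdd - (weight u).toAdd).natAbs := by
  rw [balance, toAdd_weight, toAdd_weight]

lemma xCon_eq_ker {t u : LWord} (hne : ¬ JCon t u) :
    XCon t u = Con.ker (weightMod (balance t u)) := by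
  have hJX : JCon ≤ XCon t u := Con.conGen_mono fun _ _ h => Or.inl h
  have htu : XCon t u t u := ConGen.Rel.of _ _ (Or.inr ⟨rfl, rfl⟩)
  refine le_antisymm (Con.conGen_le.2 ?_) fun x y hxy => ?_
  · rintro x y (h | ⟨rfl, rfl⟩) <;> rw [Con.ker_rel, weightMod_apply, weightMod_apply]
    · rw [weight_eq_of_jCon (ConGen.Rel.of _ _ h)]
    · rw [EmbeddingLike.apply_eq_iff_eq, ZMod.intCast_eq_intCast_iff_dvd_sub, balance_eq_natAbs,
        Int.natAbs_dvd, dvd_sub_comm]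
  · obtain ⟨U, hU⟩ := (collapses_of_rel_of_not_jCon hJX htu hne).exists_mk_eq_zpow hJX
    have hord : (orderOf U : ℤ) ∣ balance t u := by
      have htu' := (hU t).symm.trans (((XCon t u).eq.2 htu).trans (hU u))
      rw [balance_eq_natAbs, Int.dvd_natAbs, dvd_sub_comm]
      exact Int.ModEq.dvd (zpow_eq_zpow_iff_modEq.1 (Units.ext htu'))
    rw [Con.ker_rel, weightMod_apply, weightMod_apply, EmbeddingLike.apply_eq_iff_eq,
      ZMod.intCast_eq_intCast_iff_dvd_sub] at hxy
    rw [← Con.eq, hU x, hU y, zpow_eq_zpow_iff_modEq.2 (Int.modEq_iff_dvd.2 (hord.trans hxy))]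

end JOmega

/-- Maximality of `J_ω`: if the words `t` and `u` have distinct images in `J_ω`, then the
monoid `X` presented by the generators and defining relations of `J_ω` together with the
additional relation `t = u` is isomorphic, as a monoid, to the additive monoid of integers
modulo `β(t, u)` — i.e. to `(ℤ, +)` when `β(t, u) = 0` and to `ℤ/nℤ` when `β(t, u) = n > 0`
(recall `ZMod 0 = ℤ`). -/
theorem maximality_of_Jomega (t u : LWord) (hne : ¬ JCon t u) :
    Nonempty ((XCon t u).Quotient ≃* Multiplicative (ZMod (balance t u))) := by
  rw [JOmega.xCon_eq_ker hne]
  exact ⟨Con.quotientKerEquivOfSurjective _ (JOmega.weightMod_surjective _)⟩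
end

section
/- Let F be a field, n ≥ 2, p ≥ 1, and let α, β be nonzero elements of F with α² + β² + p·α·β = 0 (equivalently, p = −αβ⁻¹ − α⁻¹β in F). Put A_i = α·h_i^n + β·1_{p^n} for 1 ≤ i ≤ n−1. Then: A_i·A_j = A_j·A_i whenever |i − j| ≥ 2; A_i·A_{i+1}·A_i = A_{i+1}·A_i·A_{i+1}; and each A_i is invertible with inverse α⁻¹·h_i^n + β⁻¹·1_{p^n}. Consequently there is a group homomorphism from the braid group B_n — the group presented by generators σ_1, …, σ_{n−1} and relations σ_iσ_j = σ_jσ_i for |i − j| ≥ 2 and σ_iσ_{i+1}σ_i = σ_{i+1}σ_iσ_{i+1} — to the group of invertible p^n × p^n matrices over F, sending σ_i to A_i. -/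
open Matrix

/-- The Kronecker product of an `a × b` matrix and a `c × d` matrix, as an
`(a·c) × (b·d)` matrix: the entry at row `r = r₁·c + r₂` and column `s = s₁·d + s₂`
(with `r₂ < c`, `s₂ < d`) is `A r₁ s₁ * B r₂ s₂`. -/
def kron {F : Type*} [Mul F] {a b c d : ℕ}
    (A : Matrix (Fin a) (Fin b) F) (B : Matrix (Fin c) (Fin d) F) :
    Matrix (Fin (a * c)) (Fin (b * d)) F :=
  Matrix.of fun r s => A r.divNat s.divNat * B r.modNat s.modNat

/-- The `1 × p²` matrix `E_p`, whose entry in column `(i−1)p + j` (for `1 ≤ i, j ≤ p`)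
is `1` if `i = j` and `0` otherwise. -/
def Ep (F : Type*) [Zero F] [One F] (p : ℕ) : Matrix (Fin 1) (Fin (p * p)) F :=
  Matrix.of fun _ s => if s.divNat = s.modNat then 1 else 0

/-- The `m × p²m` matrix `φ_m = E_p ⊗ 1_m` (the counit of the self-adjunction of the
functor `p ⊗` on matrices). -/
def phiMat (F : Type*) [Semiring F] (p m : ℕ) : Matrix (Fin m) (Fin (p * p * m)) F :=
  Matrix.reindex (finCongr (Nat.one_mul m)) (Equiv.refl _)
    (kron (Ep F p) (1 : Matrix (Fin m) (Fin m) F))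

/-- The `p²m × m` matrix `γ_m = E_p' ⊗ 1_m`, where `E_p'` is the transpose of `E_p`
(the unit of the self-adjunction of the functor `p ⊗` on matrices). -/
def gammaMat (F : Type*) [Semiring F] (p m : ℕ) : Matrix (Fin (p * p * m)) (Fin m) F :=
  Matrix.reindex (Equiv.refl _) (finCongr (Nat.one_mul m))
    (kron (Ep F p)ᵀ (1 : Matrix (Fin m) (Fin m) F))

/-- The `p^n × p^n` matrix `h_k^n = 1_{p^{n−k−1}} ⊗ (E_p' · E_p) ⊗ 1_{p^{k−1}}`
(for `1 ≤ k ≤ n − 1`), reindexed along `p^{n−k−1} · p² · p^{k−1} = p^n`. -/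
def hMat (F : Type*) [Semiring F] (p n k : ℕ) (h1 : 1 ≤ k) (h2 : k < n) :
    Matrix (Fin (p ^ n)) (Fin (p ^ n)) F :=
  Matrix.reindex
    (finCongr (by
      have h : n - k - 1 + 2 + (k - 1) = n := by omega
      calc p ^ (n - k - 1) * (p * p) * p ^ (k - 1)
          = p ^ (n - k - 1) * p ^ 2 * p ^ (k - 1) := by rw [← pow_two]
        _ = p ^ (n - k - 1 + 2 + (k - 1)) := by rw [← pow_add, ← pow_add]
        _ = p ^ n := by rw [h]))
    (finCongr (by
      have h : n - k - 1 + 2 + (k - 1) = n := by omega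
      calc p ^ (n - k - 1) * (p * p) * p ^ (k - 1)
          = p ^ (n - k - 1) * p ^ 2 * p ^ (k - 1) := by rw [← pow_two]
        _ = p ^ (n - k - 1 + 2 + (k - 1)) := by rw [← pow_add, ← pow_add]
        _ = p ^ n := by rw [h]))
    (kron (kron (1 : Matrix (Fin (p ^ (n - k - 1))) (Fin (p ^ (n - k - 1))) F)
        ((Ep F p)ᵀ * Ep F p))
      (1 : Matrix (Fin (p ^ (k - 1))) (Fin (p ^ (k - 1))) F))

/-- The braid relators on the generators `σ_1, …, σ_{n−1}`: the commutators
`σ_i σ_j σ_i⁻¹ σ_j⁻¹` for `|i − j| ≥ 2` and the relators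
`σ_i σ_{i+1} σ_i σ_{i+1}⁻¹ σ_i⁻¹ σ_{i+1}⁻¹`. -/
def braidRels (n : ℕ) : Set (FreeGroup {i : ℕ // 1 ≤ i ∧ i < n}) :=
  {w | (∃ i j : {i : ℕ // 1 ≤ i ∧ i < n}, (i.1 + 2 ≤ j.1 ∨ j.1 + 2 ≤ i.1) ∧
          w = FreeGroup.of i * FreeGroup.of j * (FreeGroup.of i)⁻¹ * (FreeGroup.of j)⁻¹) ∨
       (∃ i j : {i : ℕ // 1 ≤ i ∧ i < n}, j.1 = i.1 + 1 ∧
          w = FreeGroup.of i * FreeGroup.of j * FreeGroup.of i *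
            (FreeGroup.of j)⁻¹ * (FreeGroup.of i)⁻¹ * (FreeGroup.of j)⁻¹)}

/-- The braid group `B_n`, presented by the generators `σ_1, …, σ_{n−1}` and the relations
`σ_i σ_j = σ_j σ_i` for `|i − j| ≥ 2` and `σ_i σ_{i+1} σ_i = σ_{i+1} σ_i σ_{i+1}`. -/
abbrev BraidGroup (n : ℕ) : Type := PresentedGroup (braidRels n)

open scoped Kronecker

/-! Write `e = E_p' E_p`, so that `h_k^n = 1 ⊗ e ⊗ 1`. Since `E_p E_p' = p`, every `h_k`
satisfies `h_k² = p h_k`. Generators at distance at least two act on disjoint tensor factors and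
commute. Neighbouring generators satisfy the Temperley–Lieb relations `h_i h_{i±1} h_i = h_i`:
on three factors, `1 ⊗ e = Aᵀ A` and `e ⊗ 1 = Cᵀ C` for `A = 1 ⊗ E_p` and `C = E_p ⊗ 1`, which
satisfy the snake identity `A Cᵀ = 1`. In any algebra, if `x² = p x`, `y² = p y`, `xyx = x` and
`yxy = y`, then `αx + β` and `αy + β` satisfy the braid relation and `αx + β` has inverse
`α⁻¹x + β⁻¹`, as soon as `α² + β² + pαβ = 0`. -/

section Kron

variable {R : Type*}

theorem reindex_mul_reindex [Semiring R] {l m n l' m' n' : Type*} [Fintype m] [Fintype m']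
    (e₁ : l ≃ l') (e₂ : m ≃ m') (e₃ : n ≃ n') (A : Matrix l m R) (B : Matrix m n R) :
    reindex e₁ e₂ A * reindex e₂ e₃ B = reindex e₁ e₃ (A * B) :=
  submatrix_mul_equiv A B _ _ _

theorem reindex_finCongr_reindex_finCongr {a b a' b' a'' b'' : ℕ} (h₁ : a = a') (h₂ : b = b')
    (h₃ : a' = a'') (h₄ : b' = b'') (A : Matrix (Fin a) (Fin b) R) :
    reindex (finCongr h₃) (finCongr h₄) (reindex (finCongr h₁) (finCongr h₂) A) =
      reindex (finCongr (h₁.trans h₃)) (finCongr (h₂.trans h₄)) A :=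
  rfl

theorem kron_eq_reindex_kronecker [Mul R] {a b c d : ℕ} (A : Matrix (Fin a) (Fin b) R)
    (B : Matrix (Fin c) (Fin d) R) :
    kron A B = reindex finProdFinEquiv finProdFinEquiv (A ⊗ₖ B) :=
  rfl

theorem kron_transpose [Mul R] {a b c d : ℕ} (A : Matrix (Fin a) (Fin b) R)
    (B : Matrix (Fin c) (Fin d) R) : (kron A B)ᵀ = kron Aᵀ Bᵀ :=
  rfl

theorem kron_mul_kron [CommSemiring R] {a b c a' b' c' : ℕ} (A : Matrix (Fin a) (Fin b) R)
    (B : Matrix (Fin a') (Fin b') R) (C : Matrix (Fin b) (Fin c) R)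
    (D : Matrix (Fin b') (Fin c') R) :
    kron A B * kron C D = kron (A * C) (B * D) := by
  simp only [kron_eq_reindex_kronecker, reindex_mul_reindex, mul_kronecker_mul]

theorem kron_one_one [MulZeroOneClass R] {a c : ℕ} :
    kron (1 : Matrix (Fin a) (Fin a) R) (1 : Matrix (Fin c) (Fin c) R) = 1 := by
  rw [kron_eq_reindex_kronecker, one_kronecker_one]
  exact submatrix_one_equiv _

theorem smul_kron [CommSemiring R] {a b c d : ℕ} (x : R) (A : Matrix (Fin a) (Fin b) R)
    (B : Matrix (Fin c) (Fin d) R) : kron (x • A) B = x • kron A B := by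
  rw [kron_eq_reindex_kronecker, smul_kronecker]; rfl

theorem kron_smul [CommSemiring R] {a b c d : ℕ} (x : R) (A : Matrix (Fin a) (Fin b) R)
    (B : Matrix (Fin c) (Fin d) R) : kron A (x • B) = x • kron A B := by
  rw [kron_eq_reindex_kronecker, kronecker_smul]; rfl

theorem kron_apply_finProdFinEquiv [Mul R] {a b c d : ℕ} (A : Matrix (Fin a) (Fin b) R)
    (B : Matrix (Fin c) (Fin d) R) (i : Fin a) (j : Fin c) (i' : Fin b) (j' : Fin d) :
    kron A B (finProdFinEquiv (i, j)) (finProdFinEquiv (i', j')) = A i i' * B j j' := by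
  simp [kron_eq_reindex_kronecker]

theorem finCongr_finProdFinEquiv_assoc {x y z : ℕ} (i : Fin x) (j : Fin y) (k : Fin z) :
    finCongr (mul_assoc x y z) (finProdFinEquiv (finProdFinEquiv (i, j), k)) =
      finProdFinEquiv (i, finProdFinEquiv (j, k)) := by
  ext
  simp only [finProdFinEquiv_apply_val, finCongr_apply_coe]
  ring

theorem kron_assoc [Semigroup R] {a b c d e f : ℕ} (A : Matrix (Fin a) (Fin b) R)
    (B : Matrix (Fin c) (Fin d) R) (C : Matrix (Fin e) (Fin f) R) :
    kron (kron A B) C = reindex (finCongr (mul_assoc a c e).symm)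
      (finCongr (mul_assoc b d f).symm) (kron A (kron B C)) := by
  ext r s
  obtain ⟨⟨⟨i, j⟩, k⟩, rfl⟩ := ((finProdFinEquiv.prodCongr (Equiv.refl _)).trans
    finProdFinEquiv).surjective r
  obtain ⟨⟨⟨i', j'⟩, k'⟩, rfl⟩ := ((finProdFinEquiv.prodCongr (Equiv.refl _)).trans
    finProdFinEquiv).surjective s
  simp only [Equiv.trans_apply, Equiv.prodCongr_apply, Prod.map, Equiv.refl_apply,
    reindex_apply, submatrix_apply, finCongr_symm, finCongr_finProdFinEquiv_assoc,
    kron_apply_finProdFinEquiv, mul_assoc]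

theorem kron_reindex_finCongr_left [Mul R] {a b c d a' b' : ℕ} (h₁ : a = a') (h₂ : b = b')
    (A : Matrix (Fin a) (Fin b) R) (B : Matrix (Fin c) (Fin d) R) :
    kron (reindex (finCongr h₁) (finCongr h₂) A) B =
      reindex (finCongr (by rw [h₁])) (finCongr (by rw [h₂])) (kron A B) := by
  subst h₁ h₂; rfl

theorem kron_assoc_symm [Semigroup R] {a b c d e f : ℕ} (A : Matrix (Fin a) (Fin b) R)
    (B : Matrix (Fin c) (Fin d) R) (C : Matrix (Fin e) (Fin f) R) :
    kron A (kron B C) = reindex (finCongr (mul_assoc a c e))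
      (finCongr (mul_assoc b d f)) (kron (kron A B) C) := by
  rw [kron_assoc, reindex_finCongr_reindex_finCongr]
  rfl

end Kron

def idKronId {R : Type*} [Semiring R] (a b : ℕ) {m : ℕ} (X : Matrix (Fin m) (Fin m) R) :
    Matrix (Fin (a * m * b)) (Fin (a * m * b)) R :=
  kron (kron (1 : Matrix (Fin a) (Fin a) R) X) (1 : Matrix (Fin b) (Fin b) R)

section idKronId

variable {R : Type*} {a b m : ℕ}

theorem idKronId_mul [CommSemiring R] (X Y : Matrix (Fin m) (Fin m) R) :
    idKronId a b X * idKronId a b Y = idKronId a b (X * Y) := by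
  simp only [idKronId, kron_mul_kron, Matrix.one_mul]

theorem idKronId_smul [CommSemiring R] (x : R) (X : Matrix (Fin m) (Fin m) R) :
    idKronId a b (x • X) = x • idKronId a b X := by
  simp only [idKronId, kron_smul, smul_kron]

theorem idKronId_reindex_finCongr [Semiring R] {m' : ℕ} (h : m = m')
    (X : Matrix (Fin m) (Fin m) R) :
    idKronId a b (reindex (finCongr h) (finCongr h) X) =
      reindex (finCongr (by rw [h])) (finCongr (by rw [h])) (idKronId a b X) := by
  subst h; rfl

theorem idKronId_split_left [Semiring R] (c : ℕ) (X : Matrix (Fin m) (Fin m) R) :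
    idKronId (a * c) b X = reindex (finCongr (by ring)) (finCongr (by ring))
      (idKronId a b (kron (1 : Matrix (Fin c) (Fin c) R) X)) := by
  rw [idKronId, ← kron_one_one, kron_assoc (1 : Matrix (Fin a) (Fin a) R),
    kron_reindex_finCongr_left]
  rfl

theorem idKronId_split_right [Semiring R] (c : ℕ) (X : Matrix (Fin m) (Fin m) R) :
    idKronId a (c * b) X = reindex (finCongr (by ring)) (finCongr (by ring))
      (idKronId a b (kron X (1 : Matrix (Fin c) (Fin c) R))) := by
  rw [idKronId, idKronId, ← kron_one_one, kron_assoc_symm,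
    kron_assoc (1 : Matrix (Fin a) (Fin a) R) X, kron_reindex_finCongr_left,
    reindex_finCongr_reindex_finCongr]

end idKronId

section Ep

variable {R : Type*}

theorem Ep_apply_finProdFinEquiv [Zero R] [One R] {p : ℕ} (x : Fin 1) (i j : Fin p) :
    Ep R p x (finProdFinEquiv (i, j)) = if i = j then 1 else 0 := by
  change (if (finProdFinEquiv.symm _).1 = (finProdFinEquiv.symm _).2 then _ else _) = _
  rw [Equiv.symm_apply_apply]

theorem Ep_mul_transpose [Semiring R] (p : ℕ) : Ep R p * (Ep R p)ᵀ = (p : R) • 1 := by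
  ext x y
  rw [Subsingleton.elim x y, mul_apply, ← finProdFinEquiv.sum_comp, Fintype.sum_prod_type]
  simp [Ep_apply_finProdFinEquiv]

theorem transpose_Ep_mul_Ep_mul_self [CommSemiring R] (p : ℕ) :
    (Ep R p)ᵀ * Ep R p * ((Ep R p)ᵀ * Ep R p) = (p : R) • ((Ep R p)ᵀ * Ep R p) := by
  rw [Matrix.mul_assoc, ← Matrix.mul_assoc (Ep R p), Ep_mul_transpose, Matrix.smul_mul,
    Matrix.mul_smul, Matrix.one_mul]

theorem Ep_snake [CommSemiring R] (p : ℕ) :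
    reindex (finCongr (mul_one p)) (Equiv.refl _) (kron (1 : Matrix (Fin p) (Fin p) R) (Ep R p)) *
      (reindex (finCongr (one_mul p)) (finCongr (mul_assoc p p p))
        (kron (Ep R p) (1 : Matrix (Fin p) (Fin p) R)))ᵀ = 1 := by
  have row_left (r : Fin p) : finCongr (mul_one p).symm r = finProdFinEquiv (r, 0) := by
    ext; simp
  have row_right (s : Fin p) : finCongr (one_mul p).symm s = finProdFinEquiv (0, s) := by
    ext; simp
  have col (i j k : Fin p) : finCongr (mul_assoc p p p).symm
      (finProdFinEquiv (i, finProdFinEquiv (j, k))) =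
        finProdFinEquiv (finProdFinEquiv (i, j), k) := by
    rw [← finCongr_finProdFinEquiv_assoc]
    rfl
  -- entrywise: `∑ i j k, [r = i] [j = k] [i = j] [k = s] = [r = s]`
  ext r s
  rw [mul_apply, ← ((Equiv.refl _).prodCongr finProdFinEquiv).trans finProdFinEquiv |>.sum_comp]
  simp only [Equiv.trans_apply, Equiv.prodCongr_apply, Prod.map, Equiv.refl_apply,
    transpose_apply, reindex_apply, submatrix_apply, finCongr_symm, Equiv.refl_symm, row_left,
    row_right, col, kron_apply_finProdFinEquiv, Ep_apply_finProdFinEquiv]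
  simp [Fintype.sum_prod_type, one_apply, Ep_apply_finProdFinEquiv]

end Ep

section TemperleyLieb

variable {R : Type*} [CommSemiring R]

theorem temperleyLieb_of_mul_transpose_eq_one {m n : Type*} [Fintype m] [Fintype n]
    [DecidableEq m] {A C : Matrix m n R} (h : A * Cᵀ = 1) :
    Aᵀ * A * (Cᵀ * C) * (Aᵀ * A) = Aᵀ * A ∧
      Cᵀ * C * (Aᵀ * A) * (Cᵀ * C) = Cᵀ * C := by
  have h' : C * Aᵀ = 1 := by rw [← transpose_transpose C, ← transpose_mul, h, transpose_one]
  constructor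
  · calc Aᵀ * A * (Cᵀ * C) * (Aᵀ * A) = Aᵀ * (A * Cᵀ) * (C * Aᵀ) * A := by
          simp only [Matrix.mul_assoc]
      _ = Aᵀ * A := by rw [h, h', Matrix.mul_one, Matrix.mul_one]
  · calc Cᵀ * C * (Aᵀ * A) * (Cᵀ * C) = Cᵀ * (C * Aᵀ) * (A * Cᵀ) * C := by
          simp only [Matrix.mul_assoc]
      _ = Cᵀ * C := by rw [h, h', Matrix.mul_one, Matrix.mul_one]

theorem one_kron_transpose_Ep_mul_Ep (p : ℕ) :
    kron (1 : Matrix (Fin p) (Fin p) R) ((Ep R p)ᵀ * Ep R p) =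
      (reindex (finCongr (mul_one p)) (Equiv.refl _)
          (kron (1 : Matrix (Fin p) (Fin p) R) (Ep R p)))ᵀ *
        reindex (finCongr (mul_one p)) (Equiv.refl _)
          (kron (1 : Matrix (Fin p) (Fin p) R) (Ep R p)) := by
  rw [transpose_reindex, kron_transpose, transpose_one, reindex_mul_reindex, kron_mul_kron,
    Matrix.one_mul, reindex_refl_refl]

theorem transpose_Ep_mul_Ep_kron_one (p : ℕ) :
    reindex (finCongr (mul_assoc p p p)) (finCongr (mul_assoc p p p))
        (kron ((Ep R p)ᵀ * Ep R p) (1 : Matrix (Fin p) (Fin p) R)) =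
      (reindex (finCongr (one_mul p)) (finCongr (mul_assoc p p p))
          (kron (Ep R p) (1 : Matrix (Fin p) (Fin p) R)))ᵀ *
        reindex (finCongr (one_mul p)) (finCongr (mul_assoc p p p))
          (kron (Ep R p) (1 : Matrix (Fin p) (Fin p) R)) := by
  rw [transpose_reindex, kron_transpose, transpose_one, reindex_mul_reindex, kron_mul_kron,
    Matrix.mul_one]

end TemperleyLieb

section hMat

variable {R : Type*}

theorem hMat_eq_reindex_idKronId [Semiring R] {p n k : ℕ} (a b : ℕ) (h1 : 1 ≤ k) (h2 : k < n)
    (ha : p ^ (n - k - 1) = a) (hb : p ^ (k - 1) = b) (h : a * (p * p) * b = p ^ n) :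
    hMat R p n k h1 h2 =
      reindex (finCongr h) (finCongr h) (idKronId a b ((Ep R p)ᵀ * Ep R p)) := by
  subst ha hb; rfl

variable [CommSemiring R]

theorem hMat_mul_self (p n k : ℕ) (h1 : 1 ≤ k) (h2 : k < n) :
    hMat R p n k h1 h2 * hMat R p n k h1 h2 = (p : R) • hMat R p n k h1 h2 := by
  have hsz : p ^ (n - k - 1) * (p * p) * p ^ (k - 1) = p ^ n := by
    rw [← sq, ← pow_add, ← pow_add]; congr 1; omega
  rw [hMat_eq_reindex_idKronId _ _ h1 h2 rfl rfl hsz, reindex_mul_reindex, idKronId_mul,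
    transpose_Ep_mul_Ep_mul_self, idKronId_smul]
  rfl

theorem hMat_temperleyLieb (p n i : ℕ) (h1 : 1 ≤ i) (h2 : i + 1 < n) :
    hMat R p n i h1 (by omega) * hMat R p n (i + 1) (by omega) h2 * hMat R p n i h1 (by omega) =
        hMat R p n i h1 (by omega) ∧
      hMat R p n (i + 1) (by omega) h2 * hMat R p n i h1 (by omega) *
          hMat R p n (i + 1) (by omega) h2 = hMat R p n (i + 1) (by omega) h2 := by
  have hsz : p ^ (n - i - 2) * (p * (p * p)) * p ^ (i - 1) = p ^ n := by
    rw [← sq, ← pow_succ', ← pow_add, ← pow_add]; congr 1; omega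
  have hU : hMat R p n i h1 (by omega) = reindex (finCongr hsz) (finCongr hsz)
      (idKronId (p ^ (n - i - 2)) (p ^ (i - 1))
        (kron (1 : Matrix (Fin p) (Fin p) R) ((Ep R p)ᵀ * Ep R p))) := by
    rw [hMat_eq_reindex_idKronId (p ^ (n - i - 2) * p) _ h1 _
        (by rw [← pow_succ]; congr 1; omega) rfl (by rw [← hsz]; ring),
      idKronId_split_left, reindex_finCongr_reindex_finCongr]
  have hW : hMat R p n (i + 1) (by omega) h2 = reindex (finCongr hsz) (finCongr hsz)
      (idKronId (p ^ (n - i - 2)) (p ^ (i - 1))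
        (reindex (finCongr (mul_assoc p p p)) (finCongr (mul_assoc p p p))
          (kron ((Ep R p)ᵀ * Ep R p) (1 : Matrix (Fin p) (Fin p) R)))) := by
    rw [hMat_eq_reindex_idKronId (p ^ (n - i - 2)) (p * p ^ (i - 1)) _ h2 rfl
        (by rw [← pow_succ']; congr 1; omega) (by rw [← hsz]; ring),
      idKronId_split_right, reindex_finCongr_reindex_finCongr, idKronId_reindex_finCongr,
      reindex_finCongr_reindex_finCongr]
  obtain ⟨hUWU, hWUW⟩ := temperleyLieb_of_mul_transpose_eq_one (Ep_snake (R := R) p)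
  rw [hU, hW, one_kron_transpose_Ep_mul_Ep, transpose_Ep_mul_Ep_kron_one]
  simp only [reindex_mul_reindex, idKronId_mul, hUWU, hWUW, and_self]

theorem hMat_commute (p n i j : ℕ) (h1 : 1 ≤ i) (hij : i + 2 ≤ j) (hj : j < n) :
    Commute (hMat R p n i h1 (by omega)) (hMat R p n j (by omega) hj) := by
  have hsz : p ^ (n - j - 1) * (p * p * (p ^ (j - i - 2) * (p * p))) * p ^ (i - 1) = p ^ n := by
    rw [← sq, ← pow_add, ← pow_add, ← pow_add, ← pow_add]; congr 1; omega
  have hi : hMat R p n i h1 (by omega) = reindex (finCongr hsz) (finCongr hsz)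
      (idKronId (p ^ (n - j - 1)) (p ^ (i - 1)) (kron (1 : Matrix (Fin (p * p)) (Fin (p * p)) R)
        (kron (1 : Matrix (Fin (p ^ (j - i - 2))) (Fin (p ^ (j - i - 2))) R)
          ((Ep R p)ᵀ * Ep R p)))) := by
    rw [hMat_eq_reindex_idKronId (p ^ (n - j - 1) * (p * p) * p ^ (j - i - 2)) _ h1 _
        (by rw [← sq, ← pow_add, ← pow_add]; congr 1; omega) rfl (by rw [← hsz]; ring),
      idKronId_split_left, idKronId_split_left, reindex_finCongr_reindex_finCongr,
      reindex_finCongr_reindex_finCongr]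
  have hj : hMat R p n j (by omega) hj = reindex (finCongr hsz) (finCongr hsz)
      (idKronId (p ^ (n - j - 1)) (p ^ (i - 1)) (kron ((Ep R p)ᵀ * Ep R p)
        (1 : Matrix (Fin (p ^ (j - i - 2) * (p * p))) (Fin (p ^ (j - i - 2) * (p * p))) R))) := by
    rw [hMat_eq_reindex_idKronId _ (p ^ (j - i - 2) * (p * p) * p ^ (i - 1)) _ hj rfl
        (by rw [← sq, ← pow_add, ← pow_add]; congr 1; omega) (by rw [← hsz]; ring),
      idKronId_split_right, reindex_finCongr_reindex_finCongr]
  rw [Commute, SemiconjBy, hi, hj]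
  simp only [reindex_mul_reindex, idKronId_mul, kron_mul_kron, Matrix.one_mul, Matrix.mul_one]

end hMat

section SmulAddSmulOne

variable {F R : Type*} [Field F] [Ring R] [Algebra F R] {x y : R}

theorem Commute.smul_add_smul_one (h : Commute x y) (a b : F) :
    Commute (a • x + b • 1) (a • y + b • 1) :=
  ((h.smul_right a).add_right ((Commute.one_right x).smul_right b)).smul_left a |>.add_left
    ((Commute.one_left _).smul_left b)

theorem smul_add_smul_one_mul_mul {a b c : F} (hrel : a ^ 2 + b ^ 2 + c * a * b = 0)
    (hx : x * x = c • x) (hxyx : x * y * x = x) :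
    (a • x + b • 1) * (a • y + b • 1) * (a • x + b • 1) =
      (a * b ^ 2) • (x + y) + (a ^ 2 * b) • (x * y + y * x) + b ^ 3 • 1 := by
  simp only [add_mul, mul_add, smul_mul_assoc, mul_smul_comm, mul_one, one_mul, hxyx, hx,
    smul_smul]
  match_scalars
  · linear_combination a * hrel
  all_goals ring

theorem smul_add_smul_one_braid {a b c : F} (hrel : a ^ 2 + b ^ 2 + c * a * b = 0)
    (hx : x * x = c • x) (hy : y * y = c • y) (hxyx : x * y * x = x) (hyxy : y * x * y = y) :
    (a • x + b • 1) * (a • y + b • 1) * (a • x + b • 1) =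
      (a • y + b • 1) * (a • x + b • 1) * (a • y + b • 1) := by
  rw [smul_add_smul_one_mul_mul hrel hx hxyx, smul_add_smul_one_mul_mul hrel hy hyxy, add_comm x,
    add_comm (x * y)]

theorem smul_add_smul_one_mul_inv {a b c : F} (ha : a ≠ 0) (hb : b ≠ 0)
    (hrel : a ^ 2 + b ^ 2 + c * a * b = 0) (hx : x * x = c • x) :
    (a • x + b • 1) * (a⁻¹ • x + b⁻¹ • 1) = 1 ∧
      (a⁻¹ • x + b⁻¹ • 1) * (a • x + b • 1) = 1 := by
  constructor <;>
  · simp only [add_mul, mul_add, smul_mul_assoc, mul_smul_comm, mul_one, one_mul, hx, smul_smul]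
    match_scalars
    · field_simp
      linear_combination hrel
    · field_simp

end SmulAddSmulOne

theorem exists_braidGroup_hom {n : ℕ} {G : Type*} [Group G]
    (g : {i : ℕ // 1 ≤ i ∧ i < n} → G)
    (hcomm : ∀ i j : {i : ℕ // 1 ≤ i ∧ i < n}, i.1 + 2 ≤ j.1 ∨ j.1 + 2 ≤ i.1 →
      Commute (g i) (g j))
    (hbraid : ∀ i j : {i : ℕ // 1 ≤ i ∧ i < n}, j.1 = i.1 + 1 →
      g i * g j * g i = g j * g i * g j) :
    ∃ f : BraidGroup n →* G, ∀ i, f (PresentedGroup.of i) = g i := by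
  have hrels : ∀ r ∈ braidRels n, FreeGroup.lift g r = 1 := by
    rintro r (⟨i, j, hij, rfl⟩ | ⟨i, j, hij, rfl⟩)
    · simp only [map_mul, map_inv, FreeGroup.lift_apply_of, (hcomm i j hij).eq]
      group
    · simp only [map_mul, map_inv, FreeGroup.lift_apply_of, hbraid i j hij]
      group
  exact ⟨PresentedGroup.toGroup hrels, fun _ => PresentedGroup.toGroup.of hrels⟩

/-- Representation of the braid group in matrices: let `F` be a field, `n ≥ 2`, `p ≥ 1`,
and `α, β` nonzero elements of `F` with `α² + β² + p·α·β = 0`.  Put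
`A_i = α·h_i^n + β·1`.  Then the `A_i` satisfy the braid relations, each `A_i` is
invertible with inverse `α⁻¹·h_i^n + β⁻¹·1`, and consequently there is a group
homomorphism from `B_n` to the group of invertible `p^n × p^n` matrices over `F`
sending `σ_i` to `A_i`. -/
theorem braid_group_representation (F : Type*) [Field F] (p n : ℕ)
    (hp : 1 ≤ p) (a b : F) (ha : a ≠ 0) (hb : b ≠ 0)
    (hrel : a ^ 2 + b ^ 2 + (p : F) * a * b = 0) :
    (∀ (i j : ℕ) (hi1 : 1 ≤ i) (hi2 : i < n) (hj1 : 1 ≤ j) (hj2 : j < n),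
      i + 2 ≤ j ∨ j + 2 ≤ i →
      (a • hMat F p n i hi1 hi2 + b • 1) * (a • hMat F p n j hj1 hj2 + b • 1) =
        (a • hMat F p n j hj1 hj2 + b • 1) * (a • hMat F p n i hi1 hi2 + b • 1)) ∧
    (∀ (i : ℕ) (h1 : 1 ≤ i) (h2 : i + 1 < n),
      (a • hMat F p n i h1 (by omega) + b • 1) * (a • hMat F p n (i + 1) (by omega) h2 + b • 1) *
          (a • hMat F p n i h1 (by omega) + b • 1) =
        (a • hMat F p n (i + 1) (by omega) h2 + b • 1) * (a • hMat F p n i h1 (by omega) + b • 1) *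
          (a • hMat F p n (i + 1) (by omega) h2 + b • 1)) ∧
    (∀ (i : ℕ) (h1 : 1 ≤ i) (h2 : i < n),
      (a • hMat F p n i h1 h2 + b • 1) * (a⁻¹ • hMat F p n i h1 h2 + b⁻¹ • 1) = 1 ∧
      (a⁻¹ • hMat F p n i h1 h2 + b⁻¹ • 1) * (a • hMat F p n i h1 h2 + b • 1) = 1) ∧
    ∃ f : BraidGroup n →* (Matrix (Fin (p ^ n)) (Fin (p ^ n)) F)ˣ,
      ∀ (i : ℕ) (h1 : 1 ≤ i) (h2 : i < n),
        (f (PresentedGroup.of ⟨i, h1, h2⟩) : Matrix (Fin (p ^ n)) (Fin (p ^ n)) F) =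
          a • hMat F p n i h1 h2 + b • 1 := by
  have hcomm : ∀ (i j : ℕ) (hi1 : 1 ≤ i) (hi2 : i < n) (hj1 : 1 ≤ j) (hj2 : j < n),
      i + 2 ≤ j ∨ j + 2 ≤ i →
      Commute (a • hMat F p n i hi1 hi2 + b • 1) (a • hMat F p n j hj1 hj2 + b • 1) := by
    rintro i j hi1 hi2 hj1 hj2 (hij | hij)
    · exact (hMat_commute p n i j hi1 hij hj2).smul_add_smul_one a b
    · exact ((hMat_commute p n j i hj1 hij hi2).smul_add_smul_one a b).symm
  have hbraid (i : ℕ) (h1 : 1 ≤ i) (h2 : i + 1 < n) :=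
    smul_add_smul_one_braid (R := Matrix (Fin (p ^ n)) (Fin (p ^ n)) F) hrel
      (hMat_mul_self p n i h1 (by omega)) (hMat_mul_self p n (i + 1) (by omega) h2)
      (hMat_temperleyLieb p n i h1 h2).1 (hMat_temperleyLieb p n i h1 h2).2
  have hinv (i : ℕ) (h1 : 1 ≤ i) (h2 : i < n) :=
    smul_add_smul_one_mul_inv (R := Matrix (Fin (p ^ n)) (Fin (p ^ n)) F) ha hb hrel
      (hMat_mul_self p n i h1 h2)
  refine ⟨fun i j hi1 hi2 hj1 hj2 hij => (hcomm i j hi1 hi2 hj1 hj2 hij).eq, hbraid, hinv, ?_⟩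
  obtain ⟨f, hf⟩ := exists_braidGroup_hom (G := (Matrix (Fin (p ^ n)) (Fin (p ^ n)) F)ˣ)
    (fun i => ⟨_, _, (hinv i.1 i.2.1 i.2.2).1, (hinv i.1 i.2.1 i.2.2).2⟩)
    (fun i j hij => Units.ext (hcomm i.1 j.1 i.2.1 i.2.2 j.2.1 j.2.2 hij).eq)
    (by rintro i ⟨j, hj1, hj2⟩ rfl; exact Units.ext (hbraid i.1 i.2.1 hj2))
  exact ⟨f, fun i h1 h2 => congrArg Units.val (hf ⟨i, h1, h2⟩)⟩
end
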